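/- arXiv:2003.08267 — 11 statements merged into one kernel-verified Lean document; each statement's English description precedes it below -/
import Mathlib

section
/- Let f, g, w ∈ ℝ^d with ⟨f, w⟩ = 0 and ⟨g, w⟩ ≠ 0. Then the matrix S = (f gᵀ − g fᵀ)/⟨g, w⟩ is skew-symmetric and satisfies S w = f. (Taking w = ∇H(x) and g = g(x) any non-vanishing vector field with ⟨g(x), ∇H(x)⟩ ≠ 0, this gives a skew-gradient form of any system x' = f(x) with first integral H.) -/
open Matrix

namespace Matrix

variable {n R : Type*} [CommRing R]

theorem transpose_vecMulVec_sub_vecMulVec (u v : n → R) :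
    (vecMulVec u v - vecMulVec v u)ᵀ = -(vecMulVec u v - vecMulVec v u) := by
  rw [transpose_sub, transpose_vecMulVec, transpose_vecMulVec, neg_sub]

theorem vecMulVec_sub_vecMulVec_mulVec [Fintype n] (u v w : n → R) :
    (vecMulVec u v - vecMulVec v u) *ᵥ w = (v ⬝ᵥ w) • u - (u ⬝ᵥ w) • v := by
  simp only [sub_mulVec, vecMulVec_mulVec, op_smul_eq_smul]

end Matrix

/-- For `f, g, w ∈ ℝ^d` with `⟨f, w⟩ = 0` and `⟨g, w⟩ ≠ 0`, the matrix
`S = (f gᵀ − g fᵀ)/⟨g, w⟩` is skew-symmetric and satisfies `S w = f`. -/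
theorem generalized_default_formula_skew_gradient_form
    (d : ℕ) (f g w : Fin d → ℝ) (hfw : f ⬝ᵥ w = 0) (hgw : g ⬝ᵥ w ≠ 0) :
    ((g ⬝ᵥ w)⁻¹ • (vecMulVec f g - vecMulVec g f))ᵀ
        = -((g ⬝ᵥ w)⁻¹ • (vecMulVec f g - vecMulVec g f)) ∧
      ((g ⬝ᵥ w)⁻¹ • (vecMulVec f g - vecMulVec g f)).mulVec w = f := by
  constructor
  · rw [transpose_smul, transpose_vecMulVec_sub_vecMulVec, smul_neg]
  · rw [smul_mulVec, vecMulVec_sub_vecMulVec_mulVec, hfw, zero_smul, sub_zero, smul_smul,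
      inv_mul_cancel₀ hgw, one_smul]
end

section
/- Let H : ℝ^d → ℝ and let ∇̄H : ℝ^d × ℝ^d → ℝ^d satisfy the discrete gradient condition ⟨∇̄H(x,y), y − x⟩ = H(y) − H(x) for all x, y ∈ ℝ^d. Let S̄ ∈ ℝ^{d×d} be skew-symmetric, h ∈ ℝ, and suppose x, x̂ ∈ ℝ^d satisfy x̂ = x + h S̄ ∇̄H(x, x̂). Then H(x̂) = H(x); that is, the discrete gradient method exactly preserves the energy H. -/
open Matrix

/-- A discrete gradient method `x̂ = x + h S̄ ∇̄H(x, x̂)` with skew-symmetric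
`S̄` exactly preserves the energy: `H(x̂) = H(x)`. -/
theorem discrete_gradient_method_preserves_energy
    (d : ℕ) (H : (Fin d → ℝ) → ℝ)
    (dg : (Fin d → ℝ) → (Fin d → ℝ) → (Fin d → ℝ))
    (hdg : ∀ x y, dg x y ⬝ᵥ (y - x) = H y - H x)
    (Sbar : Matrix (Fin d) (Fin d) ℝ) (hSbar : Sbarᵀ = -Sbar)
    (h : ℝ) (x xh : Fin d → ℝ)
    (hscheme : xh = x + h • Sbar.mulVec (dg x xh)) :
    H xh = H x := by
  set v := dg x xh with hv
  have hdiff : xh - x = h • Sbar.mulVec v := by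
    rw [hscheme]; abel
  have hskew : v ⬝ᵥ Sbar.mulVec v = 0 := by
    have h1 : v ⬝ᵥ Sbar.mulVec v = Sbarᵀ.mulVec v ⬝ᵥ v := by
      rw [dotProduct_mulVec, ← Matrix.vecMul_transpose, transpose_transpose]
    rw [hSbar, neg_mulVec, neg_dotProduct, dotProduct_comm v (Sbar *ᵥ v)] at h1
    rw [dotProduct_comm]
    linarith
  have := hdg x xh
  rw [hdiff, dotProduct_smul, hskew, smul_zero] at this
  linarith
end

section
/- Let H : ℝ^d → ℝ be differentiable at x ∈ ℝ^d with gradient ∇H(x), and let ∇̄H : ℝ^d × ℝ^d → ℝ^d satisfy the discrete gradient condition ⟨∇̄H(x,y), y − x⟩ = H(y) − H(x) for all y ∈ ℝ^d. If the map y ↦ ∇̄H(x,y) is differentiable at y = x, then the consistency condition ∇̄H(x,x) = ∇H(x) holds automatically. -/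
open scoped RealInnerProductSpace Topology

section

variable {E : Type*} [NormedAddCommGroup E] [InnerProductSpace ℝ E] {g : E → E} {x : E}

-- By the product rule; the derivative of `g` is paired with `x - x = 0`.
theorem HasFDerivAt.inner_sub_self {g' : E →L[ℝ] E} (hg : HasFDerivAt g g' x) :
    HasFDerivAt (fun y => ⟪g y, y - x⟫) (innerSL ℝ (g x)) x := by
  refine (hg.inner ℝ ((hasFDerivAt_id x).sub_const x)).congr_fderiv ?_
  ext v
  simp [fderivInnerCLM]

theorem hasGradientAt_of_inner_sub_eq [CompleteSpace E] {f : E → ℝ}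
    (hg : DifferentiableAt ℝ g x) (hfg : ∀ᶠ y in 𝓝 x, ⟪g y, y - x⟫ = f y - f x) :
    HasGradientAt f (g x) x := by
  have hf_sub : HasFDerivAt (fun y => f y - f x) (innerSL ℝ (g x)) x :=
    hg.hasFDerivAt.inner_sub_self.congr_of_eventuallyEq (hfg.mono fun _ h => h.symm)
  rw [hasGradientAt_iff_hasFDerivAt]
  simpa only [sub_add_cancel] using (hf_sub.add_const (f x)).congr_fderiv (by ext; rfl)

end

theorem discrete_gradient_consistency_general
    (d : ℕ) (H : EuclideanSpace ℝ (Fin d) → ℝ) (x : EuclideanSpace ℝ (Fin d))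
    (dg : EuclideanSpace ℝ (Fin d) → EuclideanSpace ℝ (Fin d) → EuclideanSpace ℝ (Fin d))
    (hdg : ∀ y, ⟪dg x y, y - x⟫ = H y - H x)
    (hdiff : DifferentiableAt ℝ (dg x) x) :
    dg x x = gradient H x :=
  (hasGradientAt_of_inner_sub_eq hdiff (.of_forall hdg)).gradient.symm

/-- For a differentiable (in the second argument) discrete gradient, the
consistency condition `∇̄H(x,x) = ∇H(x)` follows from the discrete gradient condition. -/
theorem discrete_gradient_consistency
    (d : ℕ) (H : EuclideanSpace ℝ (Fin d) → ℝ) (x : EuclideanSpace ℝ (Fin d))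
    (hH : DifferentiableAt ℝ H x)
    (dg : EuclideanSpace ℝ (Fin d) → EuclideanSpace ℝ (Fin d) → EuclideanSpace ℝ (Fin d))
    (hdg : ∀ y, ⟪dg x y, y - x⟫ = H y - H x)
    (hdiff : DifferentiableAt ℝ (dg x) x) :
    dg x x = gradient H x :=
  discrete_gradient_consistency_general d H x dg hdg hdiff
end

section
/- Let H : ℝ^d → ℝ be twice continuously differentiable, and let ∇̄H : ℝ^d × ℝ^d → ℝ^d satisfy the discrete gradient condition, with y ↦ ∇̄H(x,y) twice continuously differentiable. Then for every x ∈ ℝ^d the Hessian of H satisfies ∇²H(x) = D₂∇̄H(x,x) + (D₂∇̄H(x,x))ᵀ; equivalently, ⟨∇²H(x)u, v⟩ = ⟨D₂∇̄H(x,x)u, v⟩ + ⟨D₂∇̄H(x,x)v, u⟩ for all u, v ∈ ℝ^d. -/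
/-!
Fix `x` and put `g = ∇̄H(x, ·)`. The discrete gradient condition reads
`H y = H x + ⟪g y, y - x⟫`, so `H` is as regular as `g`, and differentiating this identity twice
at `y = x`, where the factor `y - x` vanishes, leaves only the two cross terms
`⟪g' x u, v⟫ + ⟪g' x v, u⟫`.
-/

open scoped RealInnerProductSpace Gradient

variable {E : Type*} [NormedAddCommGroup E] [InnerProductSpace ℝ E]

theorem inner_fderiv_gradient_apply [CompleteSpace E] (f : E → ℝ) (x u v : E) :
    ⟪fderiv ℝ (∇ f) x u, v⟫ = fderiv ℝ (fderiv ℝ f) x u v := by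
  have hgrad : ∇ f = (InnerProductSpace.toDual ℝ E).symm ∘ fderiv ℝ f := rfl
  rw [hgrad, LinearIsometryEquiv.comp_fderiv]
  exact InnerProductSpace.toDual_symm_apply

section DiscreteGradient

variable {H : E → ℝ} {g : E → E} {x : E}

theorem eq_const_add_inner_of_inner_sub_eq (hg : ∀ y, ⟪g y, y - x⟫ = H y - H x) :
    H = fun y => H x + ⟪g y, y - x⟫ := by
  funext y
  rw [hg]
  ring

theorem contDiff_of_inner_sub_eq {n : WithTop ℕ∞} (hg : ∀ y, ⟪g y, y - x⟫ = H y - H x)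
    (hgn : ContDiff ℝ n g) : ContDiff ℝ n H := by
  rw [eq_const_add_inner_of_inner_sub_eq hg]
  exact contDiff_const.add (hgn.inner ℝ (contDiff_id.sub contDiff_const))

theorem fderiv_apply_of_inner_sub_eq (hg : ∀ y, ⟪g y, y - x⟫ = H y - H x) {y : E}
    (hgy : DifferentiableAt ℝ g y) (v : E) :
    fderiv ℝ H y v = ⟪g y, v⟫ + ⟪fderiv ℝ g y v, y - x⟫ := by
  rw [eq_const_add_inner_of_inner_sub_eq hg, fderiv_const_add,
    fderiv_inner_apply ℝ hgy (differentiableAt_fun_id.sub_const x), fderiv_sub_const, fderiv_fun_id]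
  rfl

theorem fderiv_fderiv_apply_of_inner_sub_eq (hg : ∀ y, ⟪g y, y - x⟫ = H y - H x)
    (hg2 : ContDiff ℝ 2 g) (u v : E) :
    fderiv ℝ (fderiv ℝ H) x u v = ⟪fderiv ℝ g x u, v⟫ + ⟪fderiv ℝ g x v, u⟫ := by
  have hgd : Differentiable ℝ g := hg2.differentiable two_ne_zero
  have hg'v : Differentiable ℝ (fun y => fderiv ℝ g y v) :=
    ((hg2.fderiv_right le_rfl).differentiable one_ne_zero).clm_apply (differentiable_const v)
  have hH' : DifferentiableAt ℝ (fderiv ℝ H) x :=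
    ((contDiff_of_inner_sub_eq hg hg2).fderiv_right le_rfl).differentiable one_ne_zero x
  have hfun : (fun y => fderiv ℝ H y v) = fun y => ⟪g y, v⟫ + ⟪fderiv ℝ g y v, y - x⟫ :=
    funext fun y => fderiv_apply_of_inner_sub_eq hg (hgd y) v
  calc fderiv ℝ (fderiv ℝ H) x u v
      = fderiv ℝ (fun y => fderiv ℝ H y v) x u := by
        simp [fderiv_clm_apply hH' (differentiableAt_const v)]
    _ = ⟪fderiv ℝ g x u, v⟫ + ⟪fderiv ℝ g x v, u⟫ := by
        rw [hfun, fderiv_fun_add ((hgd x).inner ℝ (differentiableAt_const v))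
            ((hg'v x).inner ℝ (differentiableAt_fun_id.sub_const x)), add_apply,
          fderiv_inner_apply ℝ (hgd x) (differentiableAt_const v),
          fderiv_inner_apply ℝ (hg'v x) (differentiableAt_fun_id.sub_const x),
          fderiv_sub_const, fderiv_fun_id, fderiv_fun_const]
        simp [real_inner_comm]

end DiscreteGradient

theorem hessian_eq_discrete_gradient_jacobian_add_transpose_general
    (d : ℕ) (H : EuclideanSpace ℝ (Fin d) → ℝ)
    (dg : EuclideanSpace ℝ (Fin d) → EuclideanSpace ℝ (Fin d) → EuclideanSpace ℝ (Fin d))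
    (hdg : ∀ x y, ⟪dg x y, y - x⟫ = H y - H x)
    (hdg2 : ∀ x, ContDiff ℝ 2 (dg x)) :
    ∀ (x u v : EuclideanSpace ℝ (Fin d)),
      ⟪fderiv ℝ (gradient H) x u, v⟫ =
        ⟪fderiv ℝ (dg x) x u, v⟫ + ⟪fderiv ℝ (dg x) x v, u⟫ := by
  intro x u v
  rw [inner_fderiv_gradient_apply, fderiv_fderiv_apply_of_inner_sub_eq (hdg x) (hdg2 x)]

/-- For a C² (in the second argument) discrete gradient of a C² function `H`,
the Hessian satisfies `∇²H(x) = D₂∇̄H(x,x) + (D₂∇̄H(x,x))ᵀ`, i.e.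
`⟨∇²H(x)u, v⟩ = ⟨D₂∇̄H(x,x)u, v⟩ + ⟨D₂∇̄H(x,x)v, u⟩` for all `u, v`. -/
theorem hessian_eq_discrete_gradient_jacobian_add_transpose
    (d : ℕ) (H : EuclideanSpace ℝ (Fin d) → ℝ) (hH : ContDiff ℝ 2 H)
    (dg : EuclideanSpace ℝ (Fin d) → EuclideanSpace ℝ (Fin d) → EuclideanSpace ℝ (Fin d))
    (hdg : ∀ x y, ⟪dg x y, y - x⟫ = H y - H x)
    (hdg2 : ∀ x, ContDiff ℝ 2 (dg x)) :
    ∀ (x u v : EuclideanSpace ℝ (Fin d)),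
      ⟪fderiv ℝ (gradient H) x u, v⟫ =
        ⟪fderiv ℝ (dg x) x u, v⟫ + ⟪fderiv ℝ (dg x) x v, u⟫ :=
  hessian_eq_discrete_gradient_jacobian_add_transpose_general d H dg hdg hdg2
end

section
/- Let H : ℝ^d → ℝ be twice continuously differentiable and let ∇̄H : ℝ^d × ℝ^d → ℝ^d be a continuously differentiable (jointly in both arguments) map satisfying the discrete gradient condition. If ∇̄H is symmetric, i.e. ∇̄H(x,y) = ∇̄H(y,x) for all x, y ∈ ℝ^d, then D₂∇̄H(x,x) = ½ ∇²H(x) for every x ∈ ℝ^d. -/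
open scoped RealInnerProductSpace

/-!
Write `F(x, y) = ∇̄H(x, y)` and `L = DF(x, x)`. Along the segment `t ↦ (x + t u, x + t v)` the
discrete gradient condition reads `t m(t) = H(x + t v) - H(x + t u)` with
`m(t) = ⟪F(x + t u, x + t v), v - u⟫`. Since `m` is `C¹`, the second derivative of `t m(t)` at `0`
exists and equals `2 m'(0)`, so `2 ⟪L (u, v), v - u⟫ = ∇²H(x)[v, v] - ∇²H(x)[u, u]`. Symmetry of
`∇̄H` gives `L (u, v) = A u + A v` with `A = D₂∇̄H(x, x)`; taking `u = 0` identifies the quadratic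
form of `A` with half that of `∇²H(x)`, the general case makes `A` symmetric, and polarization
concludes.
-/

theorem hasDerivAt_id_mul_of_continuousAt {φ : ℝ → ℝ} (hφ : ContinuousAt φ 0) :
    HasDerivAt (fun t => t * φ t) (φ 0) 0 := by
  rw [hasDerivAt_iff_tendsto_slope]
  refine (hφ.tendsto.mono_left nhdsWithin_le_nhds).congr' ?_
  filter_upwards [self_mem_nhdsWithin] with t (ht : t ≠ 0)
  rw [slope_def_field, zero_mul, sub_zero, sub_zero, mul_div_cancel_left₀ _ ht]

theorem hasDerivAt_deriv_id_mul {m : ℝ → ℝ} (hm : ContDiff ℝ 1 m) :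
    HasDerivAt (deriv fun t => t * m t) (2 * deriv m 0) 0 := by
  have hm' := hm.differentiable one_ne_zero
  have hderiv : (deriv fun t => t * m t) = fun t => m t + t * deriv m t := by
    funext t
    simpa using ((hasDerivAt_id' t).fun_mul (hm' t).hasDerivAt).deriv
  rw [hderiv, two_mul]
  exact (hm' 0).hasDerivAt.add
    (hasDerivAt_id_mul_of_continuousAt (hm.continuous_deriv le_rfl).continuousAt)

section Line

variable {E F : Type*} [NormedAddCommGroup E] [NormedSpace ℝ E]
  [NormedAddCommGroup F] [NormedSpace ℝ F]

theorem hasDerivAt_add_smul (x v : E) (t : ℝ) : HasDerivAt (fun t : ℝ => x + t • v) v t := by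
  simpa using ((hasDerivAt_id t).smul_const v).const_add x

theorem hasDerivAt_deriv_comp_add_smul {H : E → F} (hH : ContDiff ℝ 2 H) (x v : E) :
    HasDerivAt (deriv fun t : ℝ => H (x + t • v)) (fderiv ℝ (fderiv ℝ H) x v v) 0 := by
  have hderiv : (deriv fun t : ℝ => H (x + t • v)) = fun t => fderiv ℝ H (x + t • v) v := by
    funext t
    exact ((hH.differentiable two_ne_zero _).hasFDerivAt.comp_hasDerivAt t
      (hasDerivAt_add_smul x v t)).deriv
  have hH2 : HasFDerivAt (fderiv ℝ H) (fderiv ℝ (fderiv ℝ H) x) (x + (0 : ℝ) • v) := by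
    rw [zero_smul, add_zero]
    exact ((hH.fderiv_right (by norm_num)).differentiable one_ne_zero x).hasFDerivAt
  rw [hderiv]
  exact (ContinuousLinearMap.apply ℝ F v).hasFDerivAt.comp_hasDerivAt 0
    (hH2.comp_hasDerivAt 0 (hasDerivAt_add_smul x v 0))

end Line

section Hessian

variable {E : Type*} [NormedAddCommGroup E] [InnerProductSpace ℝ E] [CompleteSpace E]

theorem inner_fderiv_gradient_apply_s6 (H : E → ℝ) (x v w : E) :
    ⟪fderiv ℝ (gradient H) x v, w⟫ = fderiv ℝ (fderiv ℝ H) x v w := by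
  have : gradient H = (InnerProductSpace.toDual ℝ E).symm ∘ fderiv ℝ H := rfl
  rw [this, LinearIsometryEquiv.comp_fderiv']
  simp only [ContinuousLinearMap.comp_apply]
  exact InnerProductSpace.toDual_symm_apply

theorem isSymmetric_fderiv_gradient {H : E → ℝ} {x : E} (hH : ContDiffAt ℝ 2 H x) :
    (fderiv ℝ (gradient H) x : E →ₗ[ℝ] E).IsSymmetric := by
  intro v w
  rw [ContinuousLinearMap.coe_coe, real_inner_comm _ v, inner_fderiv_gradient_apply_s6,
    inner_fderiv_gradient_apply_s6]
  exact hH.isSymmSndFDerivAt (by simp) v w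

end Hessian

section LinearAlgebra

variable {E : Type*} [NormedAddCommGroup E] [InnerProductSpace ℝ E]

theorem eq_inv_two_smul_of_inner_add_sub {A G : E →L[ℝ] E} (hG : (G : E →ₗ[ℝ] E).IsSymmetric)
    (h : ∀ u v, 2 * ⟪A u + A v, v - u⟫ = ⟪G v, v⟫ - ⟪G u, u⟫) : A = (2 : ℝ)⁻¹ • G := by
  have hdiag : ∀ v, 2 * ⟪A v, v⟫ = ⟪G v, v⟫ := fun v => by simpa using h 0 v
  have hAsymm : ∀ u v, ⟪A u, v⟫ = ⟪A v, u⟫ := fun u v => by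
    have := h u v
    simp only [inner_add_left, inner_sub_right] at this
    linarith [hdiag u, hdiag v]
  ext1 u
  refine ext_inner_right ℝ fun v => ?_
  have := hdiag (u + v)
  simp only [map_add, inner_add_left, inner_add_right] at this
  have hGuv : ⟪G u, v⟫ = ⟪G v, u⟫ := by rw [real_inner_comm]; exact (hG v u).symm
  rw [smul_apply, real_inner_smul_left]
  linarith [hdiag u, hdiag v, hAsymm u v]

end LinearAlgebra

section DiscreteGradient

variable {E : Type*} [NormedAddCommGroup E] [InnerProductSpace ℝ E]

theorem fderiv_uncurry_apply_of_symm {dg : E → E → E} {x : E}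
    (hdiff : DifferentiableAt ℝ (fun p : E × E => dg p.1 p.2) (x, x))
    (hsymm : ∀ x y, dg x y = dg y x) (u v : E) :
    fderiv ℝ (fun p : E × E => dg p.1 p.2) (x, x) (u, v) =
      fderiv ℝ (dg x) x u + fderiv ℝ (dg x) x v := by
  set L := fderiv ℝ (fun p : E × E => dg p.1 p.2) (x, x)
  have hsecond : HasFDerivAt (dg x) (L.comp (.inr ℝ E E)) x :=
    hdiff.hasFDerivAt.comp x (hasFDerivAt_prodMk_right x x)
  have hfirst : HasFDerivAt (fun y => dg y x) (L.comp (.inl ℝ E E)) x :=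
    hdiff.hasFDerivAt.comp x (f := fun y => (y, x)) (hasFDerivAt_prodMk_left x x)
  rw [show (fun y => dg y x) = dg x from funext fun y => hsymm y x] at hfirst
  nth_rw 1 [hfirst.fderiv]
  rw [hsecond.fderiv, ContinuousLinearMap.comp_apply, ContinuousLinearMap.comp_apply, ← map_add]
  simp

theorem two_mul_inner_fderiv_uncurry_eq_sub {H : E → ℝ} (hH : ContDiff ℝ 2 H) {dg : E → E → E}
    (hdgC1 : ContDiff ℝ 1 (fun p : E × E => dg p.1 p.2))
    (hdg : ∀ x y, ⟪dg x y, y - x⟫ = H y - H x) (x u v : E) :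
    2 * ⟪fderiv ℝ (fun p : E × E => dg p.1 p.2) (x, x) (u, v), v - u⟫ =
      fderiv ℝ (fderiv ℝ H) x v v - fderiv ℝ (fderiv ℝ H) x u u := by
  set m : ℝ → ℝ := fun t => ⟪dg (x + t • u) (x + t • v), v - u⟫
  have hm : ContDiff ℝ 1 m :=
    (hdgC1.comp (by fun_prop : ContDiff ℝ 1 fun t : ℝ => (x + t • u, x + t • v))).inner ℝ
      contDiff_const
  have hm0 : deriv m 0 = ⟪fderiv ℝ (fun p : E × E => dg p.1 p.2) (x, x) (u, v), v - u⟫ := by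
    have hline : HasDerivAt (fun t : ℝ => (x + t • u, x + t • v)) (u, v) 0 :=
      (hasDerivAt_add_smul x u 0).prodMk (hasDerivAt_add_smul x v 0)
    have hF : HasFDerivAt (fun p : E × E => dg p.1 p.2)
        (fderiv ℝ (fun p : E × E => dg p.1 p.2) (x, x)) (x + (0 : ℝ) • u, x + (0 : ℝ) • v) := by
      simpa using (hdgC1.differentiable one_ne_zero (x, x)).hasFDerivAt
    simpa using ((hF.comp_hasDerivAt 0 hline).inner ℝ (hasDerivAt_const 0 (v - u))).deriv
  have hline : (fun t : ℝ => t * m t) = fun t => H (x + t • v) - H (x + t • u) := by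
    funext t
    rw [← hdg, show x + t • v - (x + t • u) = t • (v - u) by module, real_inner_smul_right]
  have hdiff : ∀ w, Differentiable ℝ fun t : ℝ => H (x + t • w) := fun w =>
    (hH.differentiable two_ne_zero).comp (by fun_prop)
  have hderiv : (deriv fun t : ℝ => t * m t) =
      fun t => deriv (fun t : ℝ => H (x + t • v)) t - deriv (fun t : ℝ => H (x + t • u)) t := by
    rw [hline]
    funext t
    exact deriv_sub (hdiff v t) (hdiff u t)
  have h := hasDerivAt_deriv_id_mul hm
  rw [hderiv, hm0] at h
  exact h.unique
    ((hasDerivAt_deriv_comp_add_smul hH x v).sub (hasDerivAt_deriv_comp_add_smul hH x u))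

end DiscreteGradient

/-- **Lemma 1.** If a continuously differentiable discrete gradient of a C²
function `H` is symmetric, `∇̄H(x,y) = ∇̄H(y,x)`, then `D₂∇̄H(x,x) = ½ ∇²H(x)`. -/
theorem symmetric_discrete_gradient_jacobian_eq_half_hessian
    (d : ℕ) (H : EuclideanSpace ℝ (Fin d) → ℝ) (hH : ContDiff ℝ 2 H)
    (dg : EuclideanSpace ℝ (Fin d) → EuclideanSpace ℝ (Fin d) → EuclideanSpace ℝ (Fin d))
    (hdgC1 : ContDiff ℝ 1 (fun p : EuclideanSpace ℝ (Fin d) × EuclideanSpace ℝ (Fin d) =>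
      dg p.1 p.2))
    (hdg : ∀ x y, ⟪dg x y, y - x⟫ = H y - H x)
    (hsymm : ∀ x y, dg x y = dg y x) :
    ∀ x : EuclideanSpace ℝ (Fin d),
      fderiv ℝ (dg x) x = (2 : ℝ)⁻¹ • fderiv ℝ (gradient H) x := by
  intro x
  refine eq_inv_two_smul_of_inner_add_sub (isSymmetric_fderiv_gradient hH.contDiffAt)
    fun u v => ?_
  rw [← fderiv_uncurry_apply_of_symm (hdgC1.differentiable one_ne_zero (x, x)) hsymm,
    two_mul_inner_fderiv_uncurry_eq_sub hH hdgC1 hdg, inner_fderiv_gradient_apply_s6,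
    inner_fderiv_gradient_apply_s6]
end

section
/- Let H : ℝ^d → ℝ be three times continuously differentiable and let ∇̄H : ℝ^d × ℝ^d → ℝ^d satisfy the discrete gradient condition, with y ↦ ∇̄H(x,y) twice continuously differentiable. Define Q(x,y) = ½((D₂∇̄H(x,y))ᵀ − D₂∇̄H(x,y)). Then for all x, v ∈ ℝ^d, D₂Q(x,x)(v,v) = ¼ D²∇H(x)(v,v) − ¾ D₂²∇̄H(x,x)(v,v), where D₂Q(x,x)(v,v) ∈ ℝ^d denotes the derivative of y ↦ Q(x,y) at y = x in the direction v, applied as a matrix to v, D²∇H(x)(v,v) ∈ ℝ^d is the second derivative of ∇H at x evaluated at (v,v), and D₂²∇̄H(x,x)(v,v) ∈ ℝ^d is the second derivative of y ↦ ∇̄H(x,y) at y = x evaluated at (v,v). -/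
/-!
Differentiate the discrete gradient identity `⟪∇̄H(x,y), y - x⟫ = H y - H x` three times in `y`
and evaluate at `y = x`. With `B = D₂²∇̄H(x,x)` this gives
`2⟪B(v,z), v⟫ + ⟪B(v,v), z⟫ = D³H(x)(v,v,z)`, while
`⟪D₂Q(x,x)(v)v, z⟫ = ½(⟪B(v,z), v⟫ - ⟪B(v,v), z⟫)`; eliminating `⟪B(v,z), v⟫` yields the formula.
The third differentiation needs only continuity of `D₂²∇̄H` at `x`: the term that would involve
`D₂³∇̄H` carries the factor `y - x`.
-/

open scoped RealInnerProductSpace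

/-- The skew-symmetric part `Q(x,y) = ½((D₂∇̄H(x,y))ᵀ − D₂∇̄H(x,y))` of the Jacobian of a
discrete gradient with respect to its second argument (the transpose is the adjoint). -/
noncomputable def dgQ {d : ℕ}
    (dg : EuclideanSpace ℝ (Fin d) → EuclideanSpace ℝ (Fin d) → EuclideanSpace ℝ (Fin d))
    (x y : EuclideanSpace ℝ (Fin d)) :
    EuclideanSpace ℝ (Fin d) →L[ℝ] EuclideanSpace ℝ (Fin d) :=
  (2 : ℝ)⁻¹ • (ContinuousLinearMap.adjoint (fderiv ℝ (dg x) y) - fderiv ℝ (dg x) y)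

open Filter Topology

variable {E : Type*} [NormedAddCommGroup E] [InnerProductSpace ℝ E]

theorem hasFDerivAt_inner_sub_of_continuousAt {f : E → E} {x : E} (hf : ContinuousAt f x) :
    HasFDerivAt (fun y => ⟪f y, y - x⟫) (innerSL ℝ (f x)) x := by
  rw [hasFDerivAt_iff_isLittleO_nhds_zero, Asymptotics.isLittleO_iff]
  intro c hc
  have hlim : Tendsto (fun h => f (x + h) - f x) (𝓝 0) (𝓝 0) := by
    rw [tendsto_sub_nhds_zero_iff]
    exact hf.tendsto.comp ((continuous_const_add x).tendsto' 0 x (add_zero x))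
  filter_upwards [Metric.tendsto_nhds.1 hlim c hc] with h hh
  calc ‖⟪f (x + h), x + h - x⟫ - ⟪f x, x - x⟫ - innerSL ℝ (f x) h‖
      = ‖⟪f (x + h) - f x, h⟫‖ := by simp [inner_sub_left]
    _ ≤ ‖f (x + h) - f x‖ * ‖h‖ := norm_inner_le_norm _ _
    _ ≤ c * ‖h‖ := by gcongr; simpa using hh.le

section DiscreteGradient

variable {H : E → ℝ} {g : E → E} {x : E}

theorem fderiv_apply_eq_of_inner_sub_eq_sub (hg : ∀ y, ⟪g y, y - x⟫ = H y - H x) {y : E}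
    (hgy : DifferentiableAt ℝ g y) (z : E) :
    ⟪g y, z⟫ + ⟪fderiv ℝ g y z, y - x⟫ = fderiv ℝ H y z := by
  have hH : HasFDerivAt H _ y :=
    ((hgy.hasFDerivAt.inner ℝ (hasFDerivAt_sub_const x)).add_const (H x)).congr_of_eventuallyEq
      (.of_forall fun y => by simp [hg])
  simp [hH.fderiv]

theorem fderiv_fderiv_apply_eq_of_inner_sub_eq_sub (hg : ∀ y, ⟪g y, y - x⟫ = H y - H x)
    (hg1 : Differentiable ℝ g) {y : E} (hg2 : DifferentiableAt ℝ (fderiv ℝ g) y)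
    (hH2 : DifferentiableAt ℝ (fderiv ℝ H) y) (u z : E) :
    ⟪fderiv ℝ (fderiv ℝ g) y u z, y - x⟫ + ⟪fderiv ℝ g y z, u⟫ + ⟪fderiv ℝ g y u, z⟫ =
      fderiv ℝ (fderiv ℝ H) y u z := by
  have hR := ((hg1 y).hasFDerivAt.inner ℝ (hasFDerivAt_const z y)).add
    ((hg2.hasFDerivAt.clm_apply (hasFDerivAt_const z y)).inner ℝ (hasFDerivAt_sub_const x))
  have h := congrArg (· u) ((hH2.hasFDerivAt.clm_apply (hasFDerivAt_const z y)).unique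
    (hR.congr_of_eventuallyEq (.of_forall fun y =>
      (fderiv_apply_eq_of_inner_sub_eq_sub hg (hg1 y) z).symm)))
  simp only [ContinuousLinearMap.comp_zero, zero_add, ContinuousLinearMap.flip_apply, add_apply,
    ContinuousLinearMap.comp_apply, ContinuousLinearMap.prod_apply, zero_apply,
    fderivInnerCLM_apply, inner_zero_right, ContinuousLinearMap.id_apply] at h
  linarith

theorem fderiv_fderiv_fderiv_apply_eq_of_inner_sub_eq_sub
    (hg : ∀ y, ⟪g y, y - x⟫ = H y - H x) (hg1 : Differentiable ℝ g)
    (hg2 : Differentiable ℝ (fderiv ℝ g)) (hg2c : ContinuousAt (fderiv ℝ (fderiv ℝ g)) x)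
    (hH2 : Differentiable ℝ (fderiv ℝ H)) (hH3 : DifferentiableAt ℝ (fderiv ℝ (fderiv ℝ H)) x)
    (w u z : E) :
    ⟪fderiv ℝ (fderiv ℝ g) x u z, w⟫ + ⟪fderiv ℝ (fderiv ℝ g) x w z, u⟫
      + ⟪fderiv ℝ (fderiv ℝ g) x w u, z⟫ = fderiv ℝ (fderiv ℝ (fderiv ℝ H)) x w u z := by
  have h1 := hasFDerivAt_inner_sub_of_continuousAt
    ((hg2c.clm_apply (continuousAt_const (y := u))).clm_apply (continuousAt_const (y := z)))
  have h2 := ((hg2 x).hasFDerivAt.clm_apply (hasFDerivAt_const z x)).inner ℝ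
    (hasFDerivAt_const u x)
  have h3 := ((hg2 x).hasFDerivAt.clm_apply (hasFDerivAt_const u x)).inner ℝ
    (hasFDerivAt_const z x)
  have h := congrArg (· w)
    (((hH3.hasFDerivAt.clm_apply (hasFDerivAt_const u x)).clm_apply (hasFDerivAt_const z x)).unique
      (((h1.add h2).add h3).congr_of_eventuallyEq (.of_forall fun y =>
        (fderiv_fderiv_apply_eq_of_inner_sub_eq_sub hg hg1 (hg2 y) (hH2 y) u z).symm)))
  simp only [ContinuousLinearMap.comp_zero, zero_add, ContinuousLinearMap.flip_apply, add_apply,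
    coe_innerSL_apply, ContinuousLinearMap.comp_apply, ContinuousLinearMap.prod_apply, zero_apply,
    fderivInnerCLM_apply, inner_zero_right] at h
  linarith

end DiscreteGradient

theorem fderiv_half_adjoint_sub_apply [CompleteSpace E] {F : Type*} [NormedAddCommGroup F]
    [NormedSpace ℝ F] {A : F → (E →L[ℝ] E)} {x : F} (hA : DifferentiableAt ℝ A x) (w : F) :
    fderiv ℝ (fun y => (2 : ℝ)⁻¹ • (ContinuousLinearMap.adjoint (A y) - A y)) x w =
      (2 : ℝ)⁻¹ • (ContinuousLinearMap.adjoint (fderiv ℝ A x w) - fderiv ℝ A x w) := by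
  let adj : (E →L[ℝ] E) ≃L[ℝ] (E →L[ℝ] E) := ContinuousLinearMap.adjoint.toContinuousLinearEquiv
  let T : (E →L[ℝ] E) →L[ℝ] (E →L[ℝ] E) :=
    (2 : ℝ)⁻¹ • (adj.toContinuousLinearMap - ContinuousLinearMap.id ℝ _)
  exact congrArg (· w) (T.hasFDerivAt.comp x hA.hasFDerivAt).fderiv

theorem inner_iteratedFDeriv_gradient [CompleteSpace E] (H : E → ℝ) (n : ℕ) (x : E)
    (m : Fin n → E) (z : E) :
    ⟪iteratedFDeriv ℝ n (gradient H) x m, z⟫ = iteratedFDeriv ℝ n (fderiv ℝ H) x m z := by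
  let T : StrongDual ℝ E ≃L[ℝ] E := (InnerProductSpace.toDual ℝ E).symm.toContinuousLinearEquiv
  rw [show gradient H = T ∘ fderiv ℝ H from rfl, T.iteratedFDeriv_comp_left]
  exact InnerProductSpace.toDual_symm_apply

/-- `D₂Q(x,x)(v,v) = ¼ D²∇H(x)(v,v) − ¾ D₂²∇̄H(x,x)(v,v)`. -/
theorem deriv_Q_eq_quarter_third_deriv_sub
    (d : ℕ) (H : EuclideanSpace ℝ (Fin d) → ℝ) (hH : ContDiff ℝ 3 H)
    (dg : EuclideanSpace ℝ (Fin d) → EuclideanSpace ℝ (Fin d) → EuclideanSpace ℝ (Fin d))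
    (hdg : ∀ x y, ⟪dg x y, y - x⟫ = H y - H x)
    (hdg2 : ∀ x, ContDiff ℝ 2 (dg x)) :
    ∀ (x v : EuclideanSpace ℝ (Fin d)),
      (fderiv ℝ (fun y => dgQ dg x y) x v) v =
        (4 : ℝ)⁻¹ • iteratedFDeriv ℝ 2 (gradient H) x (fun _ => v)
          - (3 / 4 : ℝ) • iteratedFDeriv ℝ 2 (dg x) x (fun _ => v) := by
  intro x v
  have hDg : ContDiff ℝ 1 (fderiv ℝ (dg x)) := (hdg2 x).fderiv_right le_rfl
  have hDH : ContDiff ℝ 2 (fderiv ℝ H) := hH.fderiv_right le_rfl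
  set B := fderiv ℝ (fderiv ℝ (dg x)) x
  have hthird := fderiv_fderiv_fderiv_apply_eq_of_inner_sub_eq_sub (hdg x)
    ((hdg2 x).differentiable two_ne_zero) (hDg.differentiable one_ne_zero)
    (hDg.continuous_fderiv one_ne_zero).continuousAt (hDH.differentiable two_ne_zero)
    ((hDH.fderiv_right le_rfl).differentiable one_ne_zero x) v v
  have hQ : fderiv ℝ (fun y => dgQ dg x y) x v =
      (2 : ℝ)⁻¹ • (ContinuousLinearMap.adjoint (B v) - B v) :=
    fderiv_half_adjoint_sub_apply (hDg.differentiable one_ne_zero x) v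
  have hadj (z) : ⟪ContinuousLinearMap.adjoint (B v) v, z⟫ = ⟪B v z, v⟫ := by
    rw [ContinuousLinearMap.adjoint_inner_left, real_inner_comm]
  refine ext_inner_right ℝ fun z => ?_
  rw [hQ]
  simp only [inner_sub_left, inner_smul_left, inner_iteratedFDeriv_gradient]
  simp only [iteratedFDeriv_two_apply, sub_apply, smul_apply, inner_sub_left, inner_smul_left,
    hadj, conj_trivial]
  linarith [hthird z]
end

section
/- Let p ≥ 1, let H : ℝ^d → ℝ be (p+1) times continuously differentiable, and let ∇̄H : ℝ^d × ℝ^d → ℝ^d satisfy the discrete gradient condition with y ↦ ∇̄H(x,y) p times continuously differentiable. Define Q(x,y) = ½((D₂∇̄H(x,y))ᵀ − D₂∇̄H(x,y)). Then for every integer κ with 1 ≤ κ ≤ p and all x, v ∈ ℝ^d, D₂^κ∇̄H(x,x)(v,…,v) = (1/(κ+1)) D^κ∇H(x)(v,…,v) − (2κ/(κ+1)) D₂^{κ−1}Q(x,x)(v,…,v), where D₂^κ∇̄H(x,x)(v,…,v) ∈ ℝ^d is the κ-th derivative of y ↦ ∇̄H(x,y) at y = x evaluated at κ copies of v, D^κ∇H(x)(v,…,v)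 ∈ ℝ^d is the κ-th derivative of ∇H at x evaluated at κ copies of v, and D₂^{κ−1}Q(x,x)(v,…,v) ∈ ℝ^d is the (κ−1)-st derivative of y ↦ Q(x,y) at y = x in directions v,…,v, the resulting matrix applied to v. -/
open scoped RealInnerProductSpace

/-!
Differentiating the discrete gradient condition `⟪∇̄H(x,y), y - x⟫ = H y - H x` in `y` gives
`∇H(y) = (D₂∇̄H(x,y))ᵀ (y - x) + ∇̄H(x,y)`. Along the line `y = x + t v` the difference
`∇H - ∇̄H(x,·)` is therefore `t • u(t)` with `u(t) = (D₂∇̄H(x, x + t v))ᵀ v`, and `κ` derivatives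
at `t = 0` give `D^κ∇H(x)v^κ - D₂^κ∇̄H(x,x)v^κ = κ Mᵀ v` with `M = D₂^{κ-1}D₂∇̄H(x,x)v^{κ-1}`.
Since `M v = D₂^κ∇̄H(x,x)v^κ` and `Mᵀ v = M v + 2 D₂^{κ-1}Q(x,x)v^κ`, solving for
`D₂^κ∇̄H(x,x)v^κ` gives the formula.
-/

section Line

variable {E F : Type*} [NormedAddCommGroup E] [NormedSpace ℝ E]
  [NormedAddCommGroup F] [NormedSpace ℝ F]

theorem hasDerivAt_id_smul_zero {a : ℝ → F} (ha : ContinuousAt a 0) :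
    HasDerivAt (fun s : ℝ => s • a s) (a 0) 0 := by
  rw [hasDerivAt_iff_tendsto_slope_zero]
  refine (ha.tendsto.mono_left nhdsWithin_le_nhds).congr' ?_
  filter_upwards [self_mem_nhdsWithin] with s (hs : s ≠ 0)
  simp [smul_smul, hs]

theorem iteratedDeriv_succ_id_smul {n : ℕ} {u : ℝ → F} (hu : ContDiff ℝ (n + 1) u) (s : ℝ) :
    iteratedDeriv (n + 1) (fun t : ℝ => t • u t) s =
      s • iteratedDeriv (n + 1) u s + ((n : ℝ) + 1) • iteratedDeriv n u s := by
  have leibniz := iteratedDerivWithin_smul (Set.mem_univ s) uniqueDiffOn_univ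
    (f := fun t : ℝ => t) contDiff_id.contDiffWithinAt hu.contDiffWithinAt
  simp only [iteratedDerivWithin_univ] at leibniz
  rw [show (fun t : ℝ => t • u t) = (fun t : ℝ => t) • u from rfl, leibniz,
    Finset.sum_range_succ', Finset.sum_range_succ']
  simp [iteratedDeriv_fun_id, ← Nat.cast_smul_eq_nsmul ℝ, add_comm]

/-- Only `n` derivatives of `u` are assumed, so the last derivative is taken as a limit of
difference quotients (`hasDerivAt_id_smul_zero`) rather than by Leibniz's rule. -/
theorem iteratedDeriv_succ_id_smul_zero {n : ℕ} {u : ℝ → F} (hu : ContDiff ℝ n u) :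
    iteratedDeriv (n + 1) (fun t : ℝ => t • u t) 0 = ((n : ℝ) + 1) • iteratedDeriv n u 0 := by
  have hcont : ContinuousAt (iteratedDeriv n u) 0 :=
    (hu.continuous_iteratedDeriv n le_rfl).continuousAt
  cases n with
  | zero => simpa using (hasDerivAt_id_smul_zero hcont).deriv
  | succ m =>
    have hdiff : HasDerivAt (iteratedDeriv m u) (iteratedDeriv (m + 1) u 0) 0 := by
      rw [iteratedDeriv_succ]
      exact (hu.differentiable_iteratedDeriv m (by norm_cast; omega) 0).hasDerivAt
    rw [iteratedDeriv_succ, funext (iteratedDeriv_succ_id_smul hu),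
      ((hasDerivAt_id_smul_zero hcont).fun_add (hdiff.fun_const_smul ((m : ℝ) + 1))).deriv]
    push_cast
    module

theorem iteratedDeriv_comp_add_smul_zero {n : ℕ} {f : E → F} (hf : ContDiff ℝ n f) (x v : E) :
    iteratedDeriv n (fun t : ℝ => f (x + t • v)) 0 = iteratedFDeriv ℝ n f x (fun _ => v) := by
  have hfx : ContDiff ℝ n (fun z => f (x + z)) := hf.comp (contDiff_const.add contDiff_id)
  rw [iteratedDeriv_eq_iteratedFDeriv, show (fun t : ℝ => f (x + t • v)) =
    (fun z => f (x + z)) ∘ ContinuousLinearMap.toSpanSingleton ℝ v from rfl,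
    ContinuousLinearMap.iteratedFDeriv_comp_right _ hfx _ le_rfl, iteratedFDeriv_comp_add_left]
  simp

end Line

section Adjoint

variable (E F : Type*) [NormedAddCommGroup E] [InnerProductSpace ℝ E] [CompleteSpace E]
  [NormedAddCommGroup F] [InnerProductSpace ℝ F] [CompleteSpace F]

noncomputable def adjointCLM : (E →L[ℝ] F) →L[ℝ] (F →L[ℝ] E) :=
  ContinuousLinearMap.adjoint.toContinuousLinearEquiv.toContinuousLinearMap

@[simp]
theorem adjointCLM_apply (A : E →L[ℝ] F) : adjointCLM E F A = ContinuousLinearMap.adjoint A :=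
  rfl

end Adjoint

section DiscreteGradient

variable {E : Type*} [NormedAddCommGroup E] [InnerProductSpace ℝ E] [CompleteSpace E]

theorem contDiff_gradient {n : WithTop ℕ∞} {H : E → ℝ} (hH : ContDiff ℝ (n + 1) H) :
    ContDiff ℝ n (gradient H) :=
  (InnerProductSpace.toDual ℝ E).symm.contDiff.comp (hH.fderiv_right le_rfl)

theorem iteratedFDeriv_const_smul_adjoint_sub_apply {n : ℕ} {A : E → E →L[ℝ] E}
    (hA : ContDiff ℝ n A) (c : ℝ) (x : E) (m : Fin n → E) :
    iteratedFDeriv ℝ n (fun y => c • (ContinuousLinearMap.adjoint (A y) - A y)) x m =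
      c • (ContinuousLinearMap.adjoint (iteratedFDeriv ℝ n A x m) - iteratedFDeriv ℝ n A x m) :=
  congrArg (· m) <| (c • (adjointCLM E E - ContinuousLinearMap.id ℝ _)).iteratedFDeriv_comp_left
    hA.contDiffAt le_rfl

theorem gradient_eq_adjoint_fderiv_apply_add {H : E → ℝ} {g : E → E} {x y : E}
    (hg : DifferentiableAt ℝ g y) (hdg : ∀ z, ⟪g z, z - x⟫ = H z - H x) :
    gradient H y = ContinuousLinearMap.adjoint (fderiv ℝ g y) (y - x) + g y := by
  have hderiv : HasFDerivAt (fun z => H z - H x)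
      ((fderivInnerCLM ℝ (g y, y - x)).comp ((fderiv ℝ g y).prod (ContinuousLinearMap.id ℝ E)))
      y := by
    simpa [← funext hdg] using hg.hasFDerivAt.inner ℝ ((hasFDerivAt_id y).sub_const x)
  refine ext_inner_right ℝ fun w => ?_
  rw [gradient, InnerProductSpace.toDual_symm_apply, ← fderiv_sub_const, hderiv.fderiv]
  simp only [ContinuousLinearMap.comp_apply, ContinuousLinearMap.prod_apply,
    ContinuousLinearMap.coe_id', id_eq, fderivInnerCLM_apply, inner_add_left,
    ContinuousLinearMap.adjoint_inner_left]
  rw [real_inner_comm w, add_comm, real_inner_comm (y - x)]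

theorem iteratedFDeriv_gradient_eq_add_adjoint {n : ℕ} {H : E → ℝ} {g : E → E} {x : E}
    (hH : ContDiff ℝ (n + 2) H) (hg : ContDiff ℝ (n + 1) g)
    (hdg : ∀ y, ⟪g y, y - x⟫ = H y - H x) (v : E) :
    iteratedFDeriv ℝ (n + 1) (gradient H) x (fun _ => v) =
      iteratedFDeriv ℝ (n + 1) g x (fun _ => v) + ((n : ℝ) + 1) •
        ContinuousLinearMap.adjoint (iteratedFDeriv ℝ n (fderiv ℝ g) x (fun _ => v)) v := by
  have hgrad : ContDiff ℝ (n + 1 : ℕ) (gradient H) := by exact_mod_cast contDiff_gradient hH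
  have hg' : ContDiff ℝ (n + 1 : ℕ) g := by exact_mod_cast hg
  let L : (E →L[ℝ] E) →L[ℝ] E := ContinuousLinearMap.apply ℝ E v ∘L adjointCLM E E
  have hA : ContDiff ℝ n (fderiv ℝ g) := hg.fderiv_right le_rfl
  have hline : ContDiff ℝ (n + 1 : ℕ) fun t : ℝ => x + t • v := by fun_prop
  have hsplit : (fun t : ℝ => gradient H (x + t • v) - g (x + t • v)) =
      fun t : ℝ => t • (L ∘ fderiv ℝ g) (x + t • v) := by
    funext t
    rw [gradient_eq_adjoint_fderiv_apply_add (hg.differentiable (by simp) _) hdg]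
    simp [L]
  have h := congrArg (fun f => iteratedDeriv (n + 1) f 0) hsplit
  rw [iteratedDeriv_fun_sub (f := fun t => gradient H (x + t • v)) (g := fun t => g (x + t • v))
      (hgrad.comp hline).contDiffAt (hg'.comp hline).contDiffAt,
    iteratedDeriv_comp_add_smul_zero hgrad, iteratedDeriv_comp_add_smul_zero hg',
    iteratedDeriv_succ_id_smul_zero (u := fun t => (L ∘ fderiv ℝ g) (x + t • v))
      ((L.contDiff.comp hA).comp (hline.of_le (by simp))),
    iteratedDeriv_comp_add_smul_zero (f := L ∘ fderiv ℝ g) (L.contDiff.comp hA),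
    L.iteratedFDeriv_comp_left hA.contDiffAt le_rfl] at h
  exact eq_add_of_sub_eq' h

end DiscreteGradient

/-- **Lemma 2.** For `1 ≤ κ ≤ p`, a `C^{p+1}` function `H` and a `C^p` (in the
second argument) discrete gradient,
`D₂^κ∇̄H(x,x)v^κ = (1/(κ+1)) D^κ∇H(x)v^κ − (2κ/(κ+1)) D₂^{κ−1}Q(x,x)v^κ`. -/
theorem discrete_gradient_higher_derivatives_via_Q
    (d p : ℕ) (H : EuclideanSpace ℝ (Fin d) → ℝ) (hH : ContDiff ℝ (p + 1) H)
    (dg : EuclideanSpace ℝ (Fin d) → EuclideanSpace ℝ (Fin d) → EuclideanSpace ℝ (Fin d))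
    (hdg : ∀ x y, ⟪dg x y, y - x⟫ = H y - H x)
    (hdgp : ∀ x, ContDiff ℝ p (dg x))
    (κ : ℕ) (hκ1 : 1 ≤ κ) (hκp : κ ≤ p) :
    ∀ (x v : EuclideanSpace ℝ (Fin d)),
      iteratedFDeriv ℝ κ (dg x) x (fun _ => v) =
        ((κ : ℝ) + 1)⁻¹ • iteratedFDeriv ℝ κ (gradient H) x (fun _ => v)
          - (2 * (κ : ℝ) / ((κ : ℝ) + 1)) •
            ((iteratedFDeriv ℝ (κ - 1) (fun y => dgQ dg x y) x (fun _ => v)) v) := by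
  intro x v
  obtain ⟨k, rfl⟩ : ∃ k, κ = k + 1 := ⟨κ - 1, by omega⟩
  have hg : ContDiff ℝ (k + 1) (dg x) := (hdgp x).of_le (by exact_mod_cast hκp)
  have hH' : ContDiff ℝ (k + 2) H := hH.of_le (by exact_mod_cast Nat.add_le_add_right hκp 1)
  have hM : iteratedFDeriv ℝ k (fderiv ℝ (dg x)) x (fun _ => v) v =
      iteratedFDeriv ℝ (k + 1) (dg x) x (fun _ => v) := by
    rw [iteratedFDeriv_succ_apply_right]
    rfl
  rw [Nat.add_sub_cancel, iteratedFDeriv_gradient_eq_add_adjoint hH' hg (hdg x) v]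
  unfold dgQ
  rw [iteratedFDeriv_const_smul_adjoint_sub_apply (hg.fderiv_right le_rfl)]
  simp only [smul_apply, sub_apply, hM]
  push_cast
  match_scalars <;> field_simp <;> ring
end

section
/- Let H : ℝ^d → ℝ be twice continuously differentiable. Then there exists a function H̃ : ℝ^d × ℝ^d → ℝ such that for all x, y ∈ ℝ^d, the map y ↦ H̃(x,y) is differentiable and its gradient with respect to the second argument equals the AVF discrete gradient: ∇₂H̃(x,y) = ∇̄_AVF H(x,y) = ∫₀¹ ∇H((1−ξ)x + ξy) dξ. -/
open MeasureTheory Metric Set Filter InnerProductSpace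

/-!
Differentiating `ξ⁻¹ (f((1-ξ)x + ξy) - f x)` in `y` gives `f'((1-ξ)x + ξy)`: the factor `ξ` from the
chain rule cancels `ξ⁻¹`. Integrating over `ξ ∈ (0,1]` therefore yields a potential whose derivative
is the AVF discrete gradient. Subtracting `f x` keeps the integrand bounded near `ξ = 0` (mean value
theorem), and a local bound on `f'` justifies differentiating under the integral sign.
-/

section Potential

variable {E : Type*} [NormedAddCommGroup E] [NormedSpace ℝ E]

noncomputable def avfIntegrand (f : E → ℝ) (x y : E) (ξ : ℝ) : ℝ :=
  ξ⁻¹ * (f ((1 - ξ) • x + ξ • y) - f x)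

noncomputable def avfPotential (f : E → ℝ) (x y : E) : ℝ :=
  ∫ ξ in Ioc (0 : ℝ) 1, avfIntegrand f x y ξ

theorem hasFDerivAt_avfIntegrand {f : E → ℝ} {x y : E} {ξ : ℝ}
    (hf : DifferentiableAt ℝ f ((1 - ξ) • x + ξ • y)) (hξ : ξ ≠ 0) :
    HasFDerivAt (avfIntegrand f x · ξ) (fderiv ℝ f ((1 - ξ) • x + ξ • y)) y := by
  have hsegment : HasFDerivAt (fun y : E ↦ (1 - ξ) • x + ξ • y) (ξ • ContinuousLinearMap.id ℝ E) y :=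
    ((hasFDerivAt_id y).const_smul ξ).const_add _
  refine (((hf.hasFDerivAt.comp y hsegment).sub_const (f x)).const_mul ξ⁻¹).congr_fderiv ?_
  ext v
  simp [smul_smul, inv_mul_cancel₀ hξ]

theorem norm_avfIntegrand_le {f : E → ℝ} {s : Set E} {M ξ : ℝ} {x y : E} (hs : Convex ℝ s)
    (hf : ∀ z ∈ s, DifferentiableAt ℝ f z) (hM : ∀ z ∈ s, ‖fderiv ℝ f z‖ ≤ M) (hx : x ∈ s)
    (hξy : (1 - ξ) • x + ξ • y ∈ s) (hξ : 0 < ξ) :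
    ‖avfIntegrand f x y ξ‖ ≤ M * ‖y - x‖ := by
  have hmvt := hs.norm_image_sub_le_of_norm_fderiv_le hf hM hx hξy
  rw [show (1 - ξ) • x + ξ • y - x = ξ • (y - x) by module, norm_smul,
    Real.norm_of_nonneg hξ.le, mul_left_comm] at hmvt
  rw [avfIntegrand, norm_mul, norm_inv, Real.norm_of_nonneg hξ.le, inv_mul_le_iff₀ hξ]
  exact hmvt

theorem hasFDerivAt_avfPotential [ProperSpace E] {f : E → ℝ} (hf : ContDiff ℝ 1 f) (x y₀ : E) :
    HasFDerivAt (avfPotential f x) (∫ ξ in Ioc (0 : ℝ) 1, fderiv ℝ f ((1 - ξ) • x + ξ • y₀)) y₀ := by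
  have hdiff := hf.differentiable one_ne_zero
  have hcont := hf.continuous_fderiv one_ne_zero
  set K := closedBall (0 : E) (‖x‖ + ‖y₀‖ + 1)
  obtain ⟨M, hM⟩ : ∃ M, ∀ z ∈ K, ‖fderiv ℝ f z‖ ≤ M :=
    (isCompact_closedBall _ _).exists_bound_of_continuousOn hcont.continuousOn
  have hx : x ∈ K := by
    rw [mem_closedBall_zero_iff]
    linarith [norm_nonneg y₀]
  have hball : ball y₀ 1 ⊆ K := by
    intro y hy
    rw [mem_closedBall_zero_iff]
    linarith [norm_nonneg x, norm_le_norm_add_norm_sub' y y₀, mem_ball_iff_norm.mp hy]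
  have hsegment : ∀ ξ ∈ Ioc (0 : ℝ) 1, ∀ y ∈ K, (1 - ξ) • x + ξ • y ∈ K :=
    fun ξ hξ y hy ↦ convex_closedBall _ _ hx hy (by linarith [hξ.2]) hξ.1.le (by ring)
  have hmeas : ∀ y, AEStronglyMeasurable (avfIntegrand f x y) (volume.restrict (Ioc (0 : ℝ) 1)) :=
    fun y ↦ (measurable_inv.mul ((hf.continuous.comp (by fun_prop :
      Continuous fun ξ : ℝ ↦ (1 - ξ) • x + ξ • y)).measurable.sub_const _)).aestronglyMeasurable
  have hae : ∀ᵐ ξ ∂volume.restrict (Ioc (0 : ℝ) 1), ξ ∈ Ioc (0 : ℝ) 1 :=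
    ae_restrict_mem measurableSet_Ioc
  refine hasFDerivAt_integral_of_dominated_of_fderiv_le
    (F' := fun y ξ ↦ fderiv ℝ f ((1 - ξ) • x + ξ • y)) (ball_mem_nhds y₀ one_pos)
    (Eventually.of_forall hmeas) ?_ (hcont.comp (by fun_prop)).aestronglyMeasurable ?_
    (integrable_const M) ?_
  · refine (integrable_const (M * ‖y₀ - x‖)).mono' (hmeas y₀) ?_
    filter_upwards [hae] with ξ hξ
    exact norm_avfIntegrand_le (convex_closedBall _ _) (fun z _ ↦ hdiff z) hM hx
      (hsegment ξ hξ y₀ (hball (mem_ball_self one_pos))) hξ.1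
  · filter_upwards [hae] with ξ hξ y hy
    exact hM _ (hsegment ξ hξ y (hball hy))
  · filter_upwards [hae] with ξ hξ y _
    exact hasFDerivAt_avfIntegrand (hdiff _) hξ.1.ne'

end Potential

theorem hasGradientAt_avfPotential {F : Type*} [NormedAddCommGroup F] [InnerProductSpace ℝ F]
    [ProperSpace F] {f : F → ℝ} (hf : ContDiff ℝ 1 f) (x y : F) :
    HasGradientAt (avfPotential f x) (∫ ξ in (0 : ℝ)..1, gradient f ((1 - ξ) • x + ξ • y)) y := by
  have hdual := (toDual ℝ F).toLinearIsometry.integral_comp_comm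
    (μ := volume.restrict (Ioc (0 : ℝ) 1)) (fun ξ ↦ gradient f ((1 - ξ) • x + ξ • y))
  rw [LinearIsometryEquiv.coe_toLinearIsometry] at hdual
  rw [hasGradientAt_iff_hasFDerivAt, intervalIntegral.integral_of_le zero_le_one, ← hdual]
  simpa only [gradient, LinearIsometryEquiv.apply_symm_apply] using hasFDerivAt_avfPotential hf x y

/-- **Corollary 1.** The AVF discrete gradient is, in its second argument, the
gradient of a function `H̃ : ℝ^d × ℝ^d → ℝ`. -/
theorem avf_discrete_gradient_is_gradient_field
    (d : ℕ) (H : EuclideanSpace ℝ (Fin d) → ℝ) (hH : ContDiff ℝ 2 H) :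
    ∃ Ht : EuclideanSpace ℝ (Fin d) → EuclideanSpace ℝ (Fin d) → ℝ,
      ∀ x y : EuclideanSpace ℝ (Fin d),
        HasGradientAt (Ht x) (∫ ξ in (0:ℝ)..1, gradient H ((1 - ξ) • x + ξ • y)) y :=
  ⟨avfPotential H, hasGradientAt_avfPotential (hH.of_le one_le_two)⟩
end

section
/- Let H : ℝ^d → ℝ be such that ∇H is analytic on all of ℝ^d (with Taylor series at each point converging to ∇H everywhere). Suppose ḡ : ℝ^d × ℝ^d → ℝ^d satisfies the discrete gradient condition ⟨ḡ(x,y), y−x⟩ = H(y) − H(x) for all x, y, that for every x the map y ↦ ḡ(x,y) is analytic on ℝ^d with everywhere-converging Taylor series, and that the Jacobian D₂ḡ(x,y) is a symmetric matrix for all x, y. Then ḡ coincides with the AVF discrete gradient: ḡ(x,y) = ∫₀¹ ∇H((1−ξ)x + ξy) dξ for all x, y ∈ ℝ^d. That is, the AVF discrete gradient is the unique discrete gradient with everywhere symmetric Jacobian in its second argument. -/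
/-!
Differentiating `⟪ḡ(x, z), z - x⟫ = H z - H x` in `z` gives
`⟪D₂ḡ(x, z) u, z - x⟫ + ⟪ḡ(x, z), u⟫ = ⟪∇H z, u⟫`, and symmetry of `D₂ḡ(x, z)` turns this into
`D₂ḡ(x, z) (z - x) + ḡ(x, z) = ∇H z`. On the segment `z = x + ξ (y - x)` the left-hand side is the
`ξ`-derivative of `ξ ḡ(x, z)`, so integrating over `[0, 1]` yields `ḡ(x, y) = ∇̄_AVF H(x, y)`.
-/

open scoped RealInnerProductSpace

variable {E : Type*} [NormedAddCommGroup E] [InnerProductSpace ℝ E] [CompleteSpace E]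

theorem fderiv_apply_sub_add_eq_of_inner_sub_eq {G : E → E} {H : E → ℝ} {x z gradHz : E}
    (hG : DifferentiableAt ℝ G z) (hH : HasGradientAt H gradHz z)
    (hdg : ∀ w, ⟪G w, w - x⟫ = H w - H x)
    (hsymm : ∀ u v, ⟪fderiv ℝ G z u, v⟫ = ⟪fderiv ℝ G z v, u⟫) :
    fderiv ℝ G z (z - x) + G z = gradHz := by
  have hinner : HasFDerivAt (fun w => ⟪G w, w - x⟫)
      ((fderivInnerCLM ℝ (G z, z - x)).comp <|
        (fderiv ℝ G z).prod (ContinuousLinearMap.id ℝ E)) z := by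
    simpa using hG.hasFDerivAt.inner ℝ ((hasFDerivAt_id z).sub_const x)
  have hdiff : HasFDerivAt (fun w => ⟪G w, w - x⟫) (InnerProductSpace.toDual ℝ E gradHz) z := by
    simpa only [hdg] using hH.hasFDerivAt.sub_const (H x)
  refine ext_inner_right ℝ fun u => ?_
  have hu := congrArg (· u) (hinner.unique hdiff)
  simp only [ContinuousLinearMap.comp_apply, ContinuousLinearMap.prod_apply,
    fderivInnerCLM_apply, ContinuousLinearMap.id_apply,
    InnerProductSpace.toDual_apply_apply] at hu
  rw [inner_add_left, hsymm, ← hu, add_comm]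

theorem eq_integral_of_fderiv_apply_sub_add_eq {G F : E → E} {x : E}
    (hG : Differentiable ℝ G) (hF : Continuous F)
    (hGF : ∀ z, fderiv ℝ G z (z - x) + G z = F z) (y : E) :
    G y = ∫ ξ in (0:ℝ)..1, F ((1 - ξ) • x + ξ • y) := by
  have hline : ∀ ξ : ℝ, (1 - ξ) • x + ξ • y = x + ξ • (y - x) := fun ξ => by module
  have hprim : ∀ ξ : ℝ,
      HasDerivAt (fun t : ℝ => t • G (x + t • (y - x))) (F (x + ξ • (y - x))) ξ := by
    intro ξ
    have hline' : HasDerivAt (fun t : ℝ => x + t • (y - x)) (y - x) ξ := by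
      simpa using ((hasDerivAt_id' ξ).smul_const (y - x)).const_add x
    refine ((hasDerivAt_id' ξ).fun_smul
      ((hG _).hasFDerivAt.comp_hasDerivAt ξ hline')).congr_deriv ?_
    rw [← hGF, add_sub_cancel_left, map_smul, one_smul, Function.comp_apply]
  have hint := intervalIntegral.integral_eq_sub_of_hasDerivAt (fun ξ _ => hprim ξ)
    ((hF.comp (by fun_prop : Continuous fun t : ℝ => x + t • (y - x))).intervalIntegrable 0 1)
  simp only [hline, hint]
  simp

theorem avf_unique_discrete_gradient_with_symmetric_jacobian_general
    (d : ℕ) (H : EuclideanSpace ℝ (Fin d) → ℝ) (hH : Differentiable ℝ H)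
    (hA : AnalyticOnNhd ℝ (gradient H) Set.univ)
    (g : EuclideanSpace ℝ (Fin d) → EuclideanSpace ℝ (Fin d) → EuclideanSpace ℝ (Fin d))
    (hdg : ∀ x y, ⟪g x y, y - x⟫ = H y - H x)
    (hgA : ∀ x, AnalyticOnNhd ℝ (g x) Set.univ)
    (hsymm : ∀ x y u v : EuclideanSpace ℝ (Fin d),
      ⟪fderiv ℝ (g x) y u, v⟫ = ⟪fderiv ℝ (g x) y v, u⟫) :
    ∀ x y : EuclideanSpace ℝ (Fin d),
      g x y = ∫ ξ in (0:ℝ)..1, gradient H ((1 - ξ) • x + ξ • y) := by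
  intro x
  have hg : Differentiable ℝ (g x) := fun z => (hgA x z trivial).differentiableAt
  exact eq_integral_of_fderiv_apply_sub_add_eq hg (continuousOn_univ.mp hA.continuousOn)
    fun z => fderiv_apply_sub_add_eq_of_inner_sub_eq (hg z) (hH z).hasGradientAt
      (hdg x) (hsymm x z)

/-- **Proposition 1, uniqueness.** If `∇H` is analytic with everywhere-converging
Taylor series, and `ḡ` is a discrete gradient of `H` which is analytic in its second argument
with everywhere-converging Taylor series and whose Jacobian in the second argument is symmetric
everywhere, then `ḡ` is the AVF discrete gradient. -/
theorem avf_unique_discrete_gradient_with_symmetric_jacobian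
    (d : ℕ) (H : EuclideanSpace ℝ (Fin d) → ℝ) (hH : Differentiable ℝ H)
    (hA : AnalyticOnNhd ℝ (gradient H) Set.univ)
    (htaylorH : ∀ x z : EuclideanSpace ℝ (Fin d),
      HasSum (fun κ : ℕ => ((κ.factorial : ℝ))⁻¹ •
          iteratedFDeriv ℝ κ (gradient H) x (fun _ => z - x)) (gradient H z))
    (g : EuclideanSpace ℝ (Fin d) → EuclideanSpace ℝ (Fin d) → EuclideanSpace ℝ (Fin d))
    (hdg : ∀ x y, ⟪g x y, y - x⟫ = H y - H x)
    (hgA : ∀ x, AnalyticOnNhd ℝ (g x) Set.univ)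
    (htaylorg : ∀ x c z : EuclideanSpace ℝ (Fin d),
      HasSum (fun κ : ℕ => ((κ.factorial : ℝ))⁻¹ •
          iteratedFDeriv ℝ κ (g x) c (fun _ => z - c)) (g x z))
    (hsymm : ∀ x y u v : EuclideanSpace ℝ (Fin d),
      ⟪fderiv ℝ (g x) y u, v⟫ = ⟪fderiv ℝ (g x) y v, u⟫) :
    ∀ x y : EuclideanSpace ℝ (Fin d),
      g x y = ∫ ξ in (0:ℝ)..1, gradient H ((1 - ξ) • x + ξ • y) :=
  avf_unique_discrete_gradient_with_symmetric_jacobian_general d H hH hA g hdg hgA hsymm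
end

section
/- Let n ≥ 0, let W₁, …, W_{n+1} ∈ ℝ^{d×d} be skew-symmetric matrices and B₁, …, B_n ∈ ℝ^{d×d} be symmetric matrices. Then the matrix M = W₁B₁W₂B₂⋯B_nW_{n+1} + (−1)ⁿ W_{n+1}B_nW_n⋯B₁W₁ is skew-symmetric; in particular, ⟨M g, g⟩ = 0 for every g ∈ ℝ^d. (This is the algebraic core of the theorem that the linear combinations of elementary differentials of f = S(x)∇H(x) of the form ω = [(μ₁,η₁)]∘⋯∘[(μ_n,η_n)]∘[η_{n+1}] + (−1)ⁿ[(μ_n,η_{n+1})]∘⋯∘[(μ₁,η₂)]∘[η₁] satisfy F(ω)(x)·∇H(x) = 0.) -/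
open Matrix

private lemma reassoc {α : Type*} [Monoid α] :
    ∀ (n : ℕ) (a : Fin (n + 1) → α) (b : Fin n → α),
      a 0 * (List.ofFn fun k : Fin n => b k * a k.succ).prod
        = (List.ofFn fun k : Fin n => a k.castSucc * b k).prod * a (Fin.last n) := by
  intro n
  induction n with
  | zero => intro a b; simp
  | succ n ih =>
    intro a b
    have h := ih (fun k => a k.succ) (fun k => b k.succ)
    have e1 : (Fin.succ (0 : Fin (n+1))) = (1 : Fin (n+2)) := rfl
    have e2 : (Fin.last n).succ = Fin.last (n+1) := Fin.succ_last n
    rw [e1, e2] at h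
    simp only [List.ofFn_succ, List.prod_cons, e1]
    rw [mul_assoc (b 0) (a 1), ← mul_assoc (a 0) (b 0), h]
    have e3 : (fun k : Fin n => a (k.castSucc).succ * b k.succ)
        = fun k : Fin n => a (k.succ).castSucc * b k.succ := by
      funext k; rw [Fin.succ_castSucc]
    rw [e3, ← mul_assoc]
    simp [Fin.castSucc_zero]

private lemma ofFn_rev' {α : Type*} (n : ℕ) (f : Fin n → α) :
    List.ofFn (fun k : Fin n => f k.rev) = (List.ofFn f).reverse := by
  apply List.ext_getElem (by simp)
  intro i h1 h2
  simp only [List.getElem_ofFn, List.getElem_reverse, List.length_ofFn] at *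
  congr 1
  ext
  simp [Fin.rev]
  omega

private lemma prod_neg (d : ℕ) :
    ∀ (n : ℕ) (f : Fin n → Matrix (Fin d) (Fin d) ℝ),
      (List.ofFn fun k : Fin n => -(f k)).prod
        = (-1 : ℝ) ^ n • (List.ofFn f).prod := by
  intro n
  induction n with
  | zero => intro f; simp
  | succ n ih =>
    intro f
    simp only [List.ofFn_succ, List.prod_cons, ih fun k => f k.succ, pow_succ]
    rw [Matrix.mul_smul, neg_mul, mul_neg_one, neg_smul, ← smul_neg]

private lemma key (d n : ℕ)
    (W : Fin (n + 1) → Matrix (Fin d) (Fin d) ℝ)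
    (B : Fin n → Matrix (Fin d) (Fin d) ℝ)
    (hW : ∀ i, (W i)ᵀ = -(W i))
    (hB : ∀ i, (B i)ᵀ = B i) :
    ((List.ofFn fun k : Fin n => W k.castSucc * B k).prod * W (Fin.last n))ᵀ
      = (-1 : ℝ) ^ (n + 1) •
        ((List.ofFn fun k : Fin n => W k.rev.succ * B k.rev).prod * W 0) := by
  rw [transpose_mul, transpose_list_prod, List.map_ofFn, hW]
  have e0 : (Matrix.transpose ∘ fun k : Fin n => W k.castSucc * B k)
      = fun k : Fin n => -(B k * W k.castSucc) := by
    funext k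
    simp [transpose_mul, hW, hB, Matrix.mul_neg]
  rw [e0, ← ofFn_rev' n fun k : Fin n => -(B k * W k.castSucc)]
  have e1 : (fun k : Fin n => (fun j : Fin n => -(B j * W j.castSucc)) k.rev)
      = fun k : Fin n => -(B k.rev * W k.rev.castSucc) := rfl
  rw [e1, prod_neg d n fun k : Fin n => B k.rev * W k.rev.castSucc]
  have h := reassoc n (fun j : Fin (n+1) => W j.rev) (fun k : Fin n => B k.rev)
  simp only [Fin.rev_succ, Fin.rev_castSucc, Fin.rev_zero, Fin.rev_last] at h
  rw [neg_mul, Matrix.mul_smul, h, pow_succ, mul_neg_one, neg_smul]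

/-- **algebraic core of Theorem 5.** For skew-symmetric `W₁, …, W_{n+1}` and
symmetric `B₁, …, B_n`, the matrix
`M = W₁B₁W₂B₂⋯B_nW_{n+1} + (−1)ⁿ W_{n+1}B_nW_n⋯B₁W₁` is skew-symmetric; in particular
`⟨M g, g⟩ = 0` for every `g`. -/
theorem alternating_product_skew_symmetric
    (d n : ℕ)
    (W : Fin (n + 1) → Matrix (Fin d) (Fin d) ℝ)
    (B : Fin n → Matrix (Fin d) (Fin d) ℝ)
    (hW : ∀ i, (W i)ᵀ = -(W i))
    (hB : ∀ i, (B i)ᵀ = B i)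
    (M : Matrix (Fin d) (Fin d) ℝ)
    (hM : M = (List.ofFn fun k : Fin n => W k.castSucc * B k).prod * W (Fin.last n)
        + (-1 : ℝ) ^ n •
          ((List.ofFn fun k : Fin n => W k.rev.succ * B k.rev).prod * W 0)) :
    Mᵀ = -M ∧ ∀ g : Fin d → ℝ, M.mulVec g ⬝ᵥ g = 0 := by
  set P := (List.ofFn fun k : Fin n => W k.castSucc * B k).prod * W (Fin.last n) with hP
  set Q := (List.ofFn fun k : Fin n => W k.rev.succ * B k.rev).prod * W 0 with hQ
  have hkey : Pᵀ = (-1 : ℝ) ^ (n + 1) • Q := key d n W B hW hB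
  have hQT : Qᵀ = (-1 : ℝ) ^ (n + 1) • P := by
    have h := congrArg Matrix.transpose hkey
    rw [transpose_transpose, Matrix.transpose_smul] at h
    rw [h, smul_smul, ← pow_add]
    have he : (-1 : ℝ) ^ (n + 1 + (n + 1)) = 1 := Even.neg_one_pow ⟨n + 1, by ring⟩
    rw [he, one_smul]
  have hskew : Mᵀ = -M := by
    rw [hM, Matrix.transpose_add, Matrix.transpose_smul, hkey, hQT,
      smul_smul, ← pow_add]
    have hodd : (-1 : ℝ) ^ (n + (n + 1)) = -1 := Odd.neg_one_pow ⟨n, by ring⟩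
    have h3 : (-1 : ℝ) ^ (n + 1) • Q = -((-1 : ℝ) ^ n • Q) := by
      rw [pow_succ, mul_neg_one, neg_smul]
    rw [hodd, h3, neg_one_smul, neg_add]
    abel
  refine ⟨hskew, fun g => ?_⟩
  have h1 : M.mulVec g ⬝ᵥ g = g ⬝ᵥ M.mulVec g := dotProduct_comm _ _
  have h2 : g ⬝ᵥ M.mulVec g = Mᵀ.mulVec g ⬝ᵥ g := by
    rw [Matrix.dotProduct_mulVec, ← Matrix.mulVec_transpose]
  have h := h1.trans h2
  rw [hskew, Matrix.neg_mulVec, neg_dotProduct] at h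
  linarith
end

section
/- Let S : ℝ^d → ℝ^{d×d} be twice continuously differentiable with S(x) skew-symmetric for every x, let H : ℝ^d → ℝ be three times continuously differentiable, and set f(x) = S(x)∇H(x). Fix x₀ ∈ ℝ^d and let y : (−ε, ε) → ℝ^d be the exact solution of y'(t) = f(y(t)) with y(0) = x₀. Suppose x̂ : (−ε, ε) → ℝ^d satisfies x̂(h) → x₀ as h → 0 and, for each h, the AVF discrete gradient scheme x̂(h) = x₀ + h S((x₀ + x̂(h))/2) ∫₀¹ ∇H((1−ξ)x₀ + ξx̂(h)) dξ. Then the scheme is of second order: ‖x̂(h) − y(h)‖ = O(h³) as h → 0. -/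
open scoped RealInnerProductSpace Topology
open Asymptotics Filter

/-!
Both the scheme and the exact flow agree with `x₀ + h f(x₀) + (h²/2) f'(x₀) f(x₀)` up to
`O(h³)`, where `f = S ∇H`. For the flow this follows from the mean value inequality applied
three times, each time feeding the previous estimate of `y(t) - x₀` into `y' = f(y)`.
The scheme reads `x̂(h) = x₀ + h T(x̂(h))`, where the discrete field
`T(x) = S((x₀ + x)/2) ∫₀¹ ∇H((1 - ξ)x₀ + ξx) dξ` satisfies
`T(x) = f(x₀) + ½ f'(x₀)(x - x₀) + O(‖x - x₀‖²)`: evaluating `S` at the midpoint and averaging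
`∇H` over the segment both halve the linear term. Hence `x̂(h) - x₀ = O(h)`, then
`x̂(h) - x₀ - h f(x₀) = O(h²)`, and finally the expansion to order `h³`.
-/

variable {α E F G : Type*} [NormedAddCommGroup E] [NormedSpace ℝ E]
  [NormedAddCommGroup F] [NormedSpace ℝ F] [NormedAddCommGroup G] [NormedSpace ℝ G]

theorem isBigO_sub_pow_succ_of_hasFDerivAt {f : E → F} {f' : E → E →L[ℝ] F} {x₀ : E} {n : ℕ}
    (hff' : ∀ᶠ x in 𝓝 x₀, HasFDerivAt f (f' x) x)
    (hf' : f' =O[𝓝 x₀] fun x => ‖x - x₀‖ ^ n) :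
    (fun x => f x - f x₀) =O[𝓝 x₀] fun x => ‖x - x₀‖ ^ (n + 1) := by
  obtain ⟨C, hC0, hC⟩ := hf'.exists_pos
  obtain ⟨r, hr, hball⟩ := Metric.eventually_nhds_iff_ball.1 (hff'.and hC.bound)
  refine IsBigO.of_bound C ?_
  filter_upwards [Metric.ball_mem_nhds x₀ hr] with x hx
  have hsub : Metric.closedBall x₀ ‖x - x₀‖ ⊆ Metric.ball x₀ r :=
    Metric.closedBall_subset_ball (by rwa [← dist_eq_norm])
  have hx' : x ∈ Metric.closedBall x₀ ‖x - x₀‖ := by simp [dist_eq_norm]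
  have hbound : ∀ z ∈ Metric.closedBall x₀ ‖x - x₀‖, ‖f' z‖ ≤ C * ‖x - x₀‖ ^ n := by
    intro z hz
    have hzx : ‖z - x₀‖ ≤ ‖x - x₀‖ := by simpa [dist_eq_norm] using hz
    refine (hball _ (hsub hz)).2.trans ?_
    rw [norm_pow, norm_norm]
    exact mul_le_mul_of_nonneg_left (pow_le_pow_left₀ (norm_nonneg _) hzx n) hC0.le
  have hmv := (convex_closedBall x₀ ‖x - x₀‖).norm_image_sub_le_of_norm_hasFDerivWithin_le
    (fun z hz => (hball _ (hsub hz)).1.hasFDerivWithinAt) hbound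
    (Metric.mem_closedBall_self (norm_nonneg _)) hx'
  simpa [pow_succ, mul_assoc] using hmv

theorem isBigO_sub_pow_succ_of_hasDerivAt {f f' : ℝ → F} {n : ℕ}
    (hff' : ∀ᶠ t in 𝓝 0, HasDerivAt f (f' t) t) (hf' : f' =O[𝓝 0] fun t => t ^ n) :
    (fun t => f t - f 0) =O[𝓝 0] fun t => t ^ (n + 1) := by
  have key := isBigO_sub_pow_succ_of_hasFDerivAt (x₀ := (0 : ℝ)) (n := n)
    (hff'.mono fun t ht => ht.hasFDerivAt) ?_
  · simpa only [sub_zero, ← norm_pow, isBigO_norm_right] using key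
  · rw [← isBigO_norm_left]
    simpa only [ContinuousLinearMap.norm_toSpanSingleton, sub_zero, ← norm_pow,
      isBigO_norm_right, isBigO_norm_left] using hf'

theorem ContDiffAt.isBigO_sub_sub_fderiv {f : E → F} {x₀ : E} (hf : ContDiffAt ℝ 2 f x₀) :
    (fun x => f x - f x₀ - fderiv ℝ f x₀ (x - x₀)) =O[𝓝 x₀] fun x => ‖x - x₀‖ ^ 2 := by
  have hderiv : ∀ᶠ x in 𝓝 x₀, HasFDerivAt (fun x => f x - f x₀ - fderiv ℝ f x₀ (x - x₀))
      (fderiv ℝ f x - fderiv ℝ f x₀) x := by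
    filter_upwards [hf.eventually (by simp)] with x hx
    have hfx := (hx.differentiableAt (by norm_num)).hasFDerivAt
    convert (hfx.sub_const (f x₀)).fun_sub
      ((fderiv ℝ f x₀).hasFDerivAt.comp x ((hasFDerivAt_id x).sub_const x₀)) using 1
    · rfl
    · rw [ContinuousLinearMap.comp_id]
  have hf' := ((hf.fderiv_right le_rfl).differentiableAt one_ne_zero).isBigO_sub.norm_right
  simpa using isBigO_sub_pow_succ_of_hasFDerivAt hderiv (n := 1) (by simpa using hf')

theorem isBigO_sub_of_isBigO_sub_sub_sq {f : E → F} {v₀ : F} {L : E →L[ℝ] F} {x₀ : E}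
    (hf : (fun x => f x - v₀ - L (x - x₀)) =O[𝓝 x₀] fun x => ‖x - x₀‖ ^ 2) :
    (fun x => f x - v₀) =O[𝓝 x₀] fun x => x - x₀ :=
  ((hf.trans_isLittleO (isLittleO_pow_sub_sub x₀ one_lt_two)).isBigO.add
    (L.isBigO_comp _ _)).congr_left fun _ => sub_add_cancel _ _

theorem isBigO_integral_segment_sub_sub [CompleteSpace F] {g : E → F} {B : E →L[ℝ] F} {x₀ : E}
    (hg : Continuous g)
    (hB : (fun x => g x - g x₀ - B (x - x₀)) =O[𝓝 x₀] fun x => ‖x - x₀‖ ^ 2) :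
    (fun x => (∫ ξ in (0 : ℝ)..1, g ((1 - ξ) • x₀ + ξ • x)) - g x₀ - (2⁻¹ : ℝ) • B (x - x₀))
      =O[𝓝 x₀] fun x => ‖x - x₀‖ ^ 2 := by
  obtain ⟨C, hC0, hC⟩ := hB.exists_pos
  obtain ⟨r, hr, hball⟩ := Metric.eventually_nhds_iff_ball.1 hC.bound
  refine IsBigO.of_bound C ?_
  filter_upwards [Metric.ball_mem_nhds x₀ hr] with x hx
  have hseg : ∀ ξ : ℝ, (1 - ξ) • x₀ + ξ • x - x₀ = ξ • (x - x₀) := fun ξ => by module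
  have hcont : Continuous fun ξ : ℝ => g ((1 - ξ) • x₀ + ξ • x) := by fun_prop
  -- `∫₀¹ ξ dξ = 1/2` turns the averaged linear term into `(1/2) B (x - x₀)`.
  have hrepr : (∫ ξ in (0 : ℝ)..1, g ((1 - ξ) • x₀ + ξ • x)) - g x₀ - (2⁻¹ : ℝ) • B (x - x₀)
      = ∫ ξ in (0 : ℝ)..1, (g ((1 - ξ) • x₀ + ξ • x) - g x₀ - B ((1 - ξ) • x₀ + ξ • x - x₀)) := by
    have hint₁ : IntervalIntegrable (fun ξ : ℝ => g ((1 - ξ) • x₀ + ξ • x) - g x₀)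
        MeasureTheory.volume 0 1 := (hcont.sub continuous_const).intervalIntegrable _ _
    have hint₂ : IntervalIntegrable (fun ξ : ℝ => ξ • B (x - x₀)) MeasureTheory.volume 0 1 :=
      (continuous_id.smul continuous_const).intervalIntegrable _ _
    simp only [hseg, map_smul]
    rw [intervalIntegral.integral_sub hint₁ hint₂,
      intervalIntegral.integral_sub (hcont.intervalIntegrable _ _) intervalIntegrable_const,
      intervalIntegral.integral_const, intervalIntegral.integral_smul_const, integral_id]
    norm_num
  rw [hrepr]
  refine (intervalIntegral.norm_integral_le_of_norm_le_const
    (C := C * ‖‖x - x₀‖ ^ 2‖) fun ξ hξ => ?_).trans (by simp)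
  rw [Set.uIoc_of_le zero_le_one] at hξ
  have hnorm : ‖(1 - ξ) • x₀ + ξ • x - x₀‖ ≤ ‖x - x₀‖ := by
    rw [hseg, norm_smul, Real.norm_of_nonneg hξ.1.le]
    exact mul_le_of_le_one_left (norm_nonneg _) hξ.2
  have hmem : (1 - ξ) • x₀ + ξ • x ∈ Metric.ball x₀ r := by
    rw [Metric.mem_ball, dist_eq_norm] at hx ⊢
    exact hnorm.trans_lt hx
  refine (hball _ hmem).trans ?_
  simp only [norm_pow, norm_norm]
  gcongr

theorem Asymptotics.IsBigO.clm_apply {l : Filter α} {p : α → F →L[ℝ] G} {q : α → F}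
    {φ ψ : α → ℝ} (hp : p =O[l] φ) (hq : q =O[l] ψ) :
    (fun a => p a (q a)) =O[l] fun a => φ a * ψ a := by
  refine (isBoundedBilinearMap_apply.isBigO_comp (f := fun pq : (F →L[ℝ] G) × F => pq.1 pq.2)
    (g := p) (h := q)).trans ?_
  simpa only [← norm_mul, isBigO_norm_left, isBigO_norm_right] using
    hp.norm_norm.mul hq.norm_norm

theorem isBigO_clm_apply_sub_sub {l : Filter α} {p p₁ : α → F →L[ℝ] G} {q q₁ : α → F}
    {p₀ : F →L[ℝ] G} {q₀ : F} {u : α → ℝ} (hu : Tendsto u l (𝓝 0))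
    (hp : (fun a => p a - p₀ - p₁ a) =O[l] fun a => u a ^ 2) (hp₁ : p₁ =O[l] u)
    (hq : (fun a => q a - q₀ - q₁ a) =O[l] fun a => u a ^ 2) (hq₁ : q₁ =O[l] u) :
    (fun a => p a (q a) - p₀ q₀ - (p₀ (q₁ a) + p₁ a q₀)) =O[l] fun a => u a ^ 2 := by
  have hu₁ : u =O[l] fun _ => (1 : ℝ) := hu.isBigO_one ℝ
  have hsq : (fun a => u a * u a) =O[l] fun a => u a ^ 2 := by
    simp only [sq]; exact isBigO_refl _ _
  have hsq_le : (fun a => u a ^ 2) =O[l] u := by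
    simpa [sq] using hu₁.mul (isBigO_refl u l)
  have hq_bdd : q =O[l] fun _ => (1 : ℝ) :=
    (((isBigO_const_one ℝ q₀ l).add (hq₁.trans hu₁)).add
      ((hq.trans hsq_le).trans hu₁)).congr_left fun a => by abel
  have hexp : ∀ a, p a (q a) - p₀ q₀ - (p₀ (q₁ a) + p₁ a q₀)
      = p₀ (q a - q₀ - q₁ a) + p₁ a (q₁ a) + p₁ a (q a - q₀ - q₁ a)
        + (p a - p₀ - p₁ a) (q a) := by
    intro a
    simp only [map_sub, sub_apply]
    abel
  simp only [hexp]
  refine ((((p₀.isBigO_comp _ l).trans hq).add ((hp₁.clm_apply hq₁).trans hsq)).add ?_).add ?_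
  · simpa using (hp₁.clm_apply hq).trans (hu₁.mul (isBigO_refl _ l))
  · simpa using hp.clm_apply hq_bdd

/-- The right-hand side `S̄(x₀, x) ∇̄_AVF g(x₀, x)` of the scheme, for `g = ∇H`. -/
noncomputable def midpointAVFField (S : E → F →L[ℝ] G) (g : E → F)
    (x₀ x : E) : G :=
  S ((2 : ℝ)⁻¹ • (x₀ + x)) (∫ ξ in (0 : ℝ)..1, g ((1 - ξ) • x₀ + ξ • x))

theorem isBigO_midpointAVFField_sub_sub [CompleteSpace F] {S : E → F →L[ℝ] G} {g : E → F}
    {x₀ : E} (hS : ContDiffAt ℝ 2 S x₀) (hg : ContDiffAt ℝ 2 g x₀) (hgc : Continuous g) :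
    (fun x => midpointAVFField S g x₀ x - S x₀ (g x₀)
        - ((2⁻¹ : ℝ) • fderiv ℝ (fun x => S x (g x)) x₀) (x - x₀))
      =O[𝓝 x₀] fun x => ‖x - x₀‖ ^ 2 := by
  have hmid : ∀ x : E, (2 : ℝ)⁻¹ • (x₀ + x) - x₀ = (2 : ℝ)⁻¹ • (x - x₀) := fun x => by module
  have hmid_tendsto : Tendsto (fun x : E => (2 : ℝ)⁻¹ • (x₀ + x)) (𝓝 x₀) (𝓝 x₀) :=
    ((continuous_const.add continuous_id).const_smul _).tendsto' _ _
      (by show (2 : ℝ)⁻¹ • (x₀ + x₀) = x₀; module)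
  have hp : (fun x => S ((2 : ℝ)⁻¹ • (x₀ + x)) - S x₀ - (2 : ℝ)⁻¹ • fderiv ℝ S x₀ (x - x₀))
      =O[𝓝 x₀] fun x => ‖x - x₀‖ ^ 2 := by
    have h := hS.isBigO_sub_sub_fderiv.comp_tendsto hmid_tendsto
    simp only [Function.comp_def, hmid, map_smul, norm_smul, mul_pow] at h
    exact h.trans ((isBigO_refl _ _).const_mul_left _)
  have hp₁ : (fun x => (2 : ℝ)⁻¹ • fderiv ℝ S x₀ (x - x₀)) =O[𝓝 x₀] fun x => ‖x - x₀‖ :=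
    (((2 : ℝ)⁻¹ • fderiv ℝ S x₀).isBigO_comp (· - x₀) _).norm_right
  have hq₁ : (fun x => (2 : ℝ)⁻¹ • fderiv ℝ g x₀ (x - x₀)) =O[𝓝 x₀] fun x => ‖x - x₀‖ :=
    (((2 : ℝ)⁻¹ • fderiv ℝ g x₀).isBigO_comp (· - x₀) _).norm_right
  refine (isBigO_clm_apply_sub_sub (tendsto_norm_sub_self x₀) hp hp₁
    (isBigO_integral_segment_sub_sub hgc hg.isBigO_sub_sub_fderiv) hq₁).congr_left fun x => ?_
  rw [fderiv_clm_apply (hS.differentiableAt two_ne_zero) (hg.differentiableAt two_ne_zero)]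
  simp [midpointAVFField, smul_add]

theorem isBigO_sub_quadratic_of_eq_add_smul {T : E → E} {x₀ v₀ : E} {L : E →L[ℝ] E}
    (hT : (fun x => T x - v₀ - L (x - x₀)) =O[𝓝 x₀] fun x => ‖x - x₀‖ ^ 2)
    {xh : ℝ → E} (hxh : Tendsto xh (𝓝 0) (𝓝 x₀))
    (hfix : ∀ᶠ h in 𝓝 0, xh h = x₀ + h • T (xh h)) :
    (fun h => xh h - (x₀ + h • v₀ + h ^ 2 • L v₀)) =O[𝓝 0] fun h => h ^ 3 := by
  have hstep : ∀ᶠ h in 𝓝 0, xh h - x₀ = h • T (xh h) :=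
    hfix.mono fun h hh => sub_eq_iff_eq_add'.2 hh
  have he : Tendsto (fun h => xh h - x₀) (𝓝 0) (𝓝 0) := tendsto_sub_nhds_zero_iff.2 hxh
  have hT₂ : (fun h => T (xh h) - v₀ - L (xh h - x₀)) =O[𝓝 0] fun h => ‖xh h - x₀‖ ^ 2 :=
    hT.comp_tendsto hxh
  have hT₁ : (fun h => T (xh h) - v₀) =O[𝓝 0] fun h => xh h - x₀ :=
    (isBigO_sub_of_isBigO_sub_sub_sq hT).comp_tendsto hxh
  have hT₀ : (fun h => T (xh h)) =O[𝓝 0] fun _ => (1 : ℝ) :=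
    (tendsto_sub_nhds_zero_iff.1 (hT₁.trans_tendsto he)).isBigO_one ℝ
  have he₁ : (fun h => xh h - x₀) =O[𝓝 0] fun h => h := by
    refine ((isBigO_refl (fun h : ℝ => h) _).smul hT₀).congr' (hstep.mono fun h hh => hh.symm) ?_
    simp
  have he₂ : (fun h => xh h - x₀ - h • v₀) =O[𝓝 0] fun h => h ^ 2 := by
    refine ((isBigO_refl (fun h : ℝ => h) _).smul (hT₁.trans he₁)).congr'
      (hstep.mono fun h hh => ?_) (by simp [sq])
    show h • (T (xh h) - v₀) = xh h - x₀ - h • v₀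
    rw [hh, smul_sub]
  have hsplit : ∀ᶠ h in 𝓝 0, h • (T (xh h) - v₀ - L (xh h - x₀)) + h • L (xh h - x₀ - h • v₀)
      = xh h - (x₀ + h • v₀ + h ^ 2 • L v₀) := hstep.mono fun h hh => by
    rw [show xh h - (x₀ + h • v₀ + h ^ 2 • L v₀) = xh h - x₀ - h • v₀ - h ^ 2 • L v₀ by abel,
      hh]
    simp only [map_sub, map_smul]
    module
  refine (((isBigO_refl _ _).smul (hT₂.trans (he₁.norm_left.pow 2))).add
    ((isBigO_refl _ _).smul ((L.isBigO_comp _ _).trans he₂))).congr' hsplit ?_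
  simp [pow_succ']

theorem isBigO_sub_quadratic_of_hasDerivAt {f : E → E} {x₀ : E} {D : E →L[ℝ] E}
    (hf : (fun x => f x - f x₀ - D (x - x₀)) =O[𝓝 x₀] fun x => ‖x - x₀‖ ^ 2)
    {y : ℝ → E} (hy0 : y 0 = x₀) (hy : ∀ᶠ t in 𝓝 0, HasDerivAt y (f (y t)) t) :
    (fun t => y t - (x₀ + t • f x₀ + (t ^ 2 / 2) • D (f x₀))) =O[𝓝 0] fun t => t ^ 3 := by
  have hyx₀ : Tendsto y (𝓝 0) (𝓝 x₀) := hy0 ▸ hy.self_of_nhds.continuousAt.tendsto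
  have hf₁ : (fun t => f (y t) - f x₀) =O[𝓝 0] fun t => y t - x₀ :=
    (isBigO_sub_of_isBigO_sub_sub_sq hf).comp_tendsto hyx₀
  have hf₀ : (fun t => f (y t)) =O[𝓝 0] fun t : ℝ => t ^ 0 := by
    simpa using (tendsto_sub_nhds_zero_iff.1
      (hf₁.trans_tendsto (tendsto_sub_nhds_zero_iff.2 hyx₀))).isBigO_one ℝ
  have hy₁ : (fun t => y t - x₀) =O[𝓝 0] fun t => t := by
    simpa [hy0] using isBigO_sub_pow_succ_of_hasDerivAt hy hf₀
  have hy₂ : (fun t => y t - x₀ - t • f x₀) =O[𝓝 0] fun t => t ^ 2 := by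
    have hderiv : ∀ᶠ t in 𝓝 0, HasDerivAt (fun t => y t - t • f x₀) (f (y t) - f x₀) t :=
      hy.mono fun t ht =>
        (ht.sub ((hasDerivAt_id t).smul_const (f x₀))).congr_deriv (by rw [one_smul])
    simpa [hy0, sub_right_comm] using
      isBigO_sub_pow_succ_of_hasDerivAt (n := 1) hderiv (by simpa using hf₁.trans hy₁)
  have hderiv : ∀ᶠ t in 𝓝 0, HasDerivAt (fun t => y t - t • f x₀ - (t ^ 2 / 2) • D (f x₀))
      (f (y t) - f x₀ - D (y t - x₀) + D (y t - x₀ - t • f x₀)) t := by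
    filter_upwards [hy] with t ht
    refine ((ht.sub ((hasDerivAt_id t).smul_const (f x₀))).sub
      (((hasDerivAt_pow 2 t).div_const 2).smul_const (D (f x₀)))).congr_deriv ?_
    simp only [map_sub, map_smul]
    norm_num
  have hderiv_bound : (fun t => f (y t) - f x₀ - D (y t - x₀) + D (y t - x₀ - t • f x₀))
      =O[𝓝 0] fun t => t ^ 2 :=
    ((hf.comp_tendsto hyx₀).trans (hy₁.norm_left.pow 2)).add ((D.isBigO_comp _ _).trans hy₂)
  refine (isBigO_sub_pow_succ_of_hasDerivAt hderiv hderiv_bound).congr_left fun t => ?_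
  simp [hy0]
  abel

theorem avf_discrete_gradient_midpoint_S_second_order_general
    (d : ℕ)
    (S : EuclideanSpace ℝ (Fin d) →
      (EuclideanSpace ℝ (Fin d) →L[ℝ] EuclideanSpace ℝ (Fin d)))
    (hS2 : ContDiff ℝ 2 S)
    (H : EuclideanSpace ℝ (Fin d) → ℝ) (hH : ContDiff ℝ 3 H)
    (x₀ : EuclideanSpace ℝ (Fin d)) (ε : ℝ) (hε : 0 < ε)
    (y : ℝ → EuclideanSpace ℝ (Fin d)) (hy0 : y 0 = x₀)
    (hy : ∀ t ∈ Set.Ioo (-ε) ε, HasDerivAt y (S (y t) (gradient H (y t))) t)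
    (xh : ℝ → EuclideanSpace ℝ (Fin d))
    (hxhlim : Tendsto xh (nhds 0) (nhds x₀))
    (hscheme : ∀ h ∈ Set.Ioo (-ε) ε, xh h = x₀ + h •
      (S ((2 : ℝ)⁻¹ • (x₀ + xh h)))
        (∫ ξ in (0:ℝ)..1, gradient H ((1 - ξ) • x₀ + ξ • xh h))) :
    (fun h => xh h - y h) =O[nhds 0] fun h => h ^ 3 := by
  have hgrad : ContDiff ℝ 2 (gradient H) :=
    (InnerProductSpace.toDual ℝ _).symm.contDiff.comp (hH.fderiv_right (by norm_num))
  have hIoo : Set.Ioo (-ε) ε ∈ 𝓝 (0 : ℝ) := Ioo_mem_nhds (neg_neg_of_pos hε) hε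
  have hxh := isBigO_sub_quadratic_of_eq_add_smul
    (isBigO_midpointAVFField_sub_sub hS2.contDiffAt hgrad.contDiffAt hgrad.continuous)
    hxhlim (eventually_of_mem hIoo hscheme)
  have hyh := isBigO_sub_quadratic_of_hasDerivAt
    (hS2.clm_apply hgrad).contDiffAt.isBigO_sub_sub_fderiv hy0 (eventually_of_mem hIoo hy)
  refine (hxh.sub hyh).congr_left fun h => ?_
  simp only [smul_apply, smul_smul, div_eq_mul_inv]
  abel

/-- **Proposition 2.** The AVF discrete gradient scheme with
`S̄(x,x̂,h) = S((x+x̂)/2)` is of second order: `‖x̂(h) − y(h)‖ = O(h³)` as `h → 0`, where `y` is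
the exact solution of `y' = S(y)∇H(y)`, `y(0) = x₀`. -/
theorem avf_discrete_gradient_midpoint_S_second_order
    (d : ℕ)
    (S : EuclideanSpace ℝ (Fin d) →
      (EuclideanSpace ℝ (Fin d) →L[ℝ] EuclideanSpace ℝ (Fin d)))
    (hS2 : ContDiff ℝ 2 S)
    (hSskew : ∀ x u v, ⟪S x u, v⟫ = -⟪u, S x v⟫)
    (H : EuclideanSpace ℝ (Fin d) → ℝ) (hH : ContDiff ℝ 3 H)
    (x₀ : EuclideanSpace ℝ (Fin d)) (ε : ℝ) (hε : 0 < ε)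
    (y : ℝ → EuclideanSpace ℝ (Fin d)) (hy0 : y 0 = x₀)
    (hy : ∀ t ∈ Set.Ioo (-ε) ε, HasDerivAt y (S (y t) (gradient H (y t))) t)
    (xh : ℝ → EuclideanSpace ℝ (Fin d))
    (hxhlim : Tendsto xh (nhds 0) (nhds x₀))
    (hscheme : ∀ h ∈ Set.Ioo (-ε) ε, xh h = x₀ + h •
      (S ((2 : ℝ)⁻¹ • (x₀ + xh h)))
        (∫ ξ in (0:ℝ)..1, gradient H ((1 - ξ) • x₀ + ξ • xh h))) :
    (fun h => xh h - y h) =O[nhds 0] fun h => h ^ 3 :=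
  avf_discrete_gradient_midpoint_S_second_order_general d S hS2 H hH x₀ ε hε y hy0 hy xh hxhlim
    hscheme
end
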